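/- arXiv:2001.02586 — 7 statements merged into one kernel-verified Lean document; each statement's English description precedes it below -/
import Mathlib

section
/- Let r ∈ ℚ with continued-fraction expansion r = a₀ + 1/(a₁ + 1/(⋯ + 1/aₙ)), with convergents p_j/q_j defined by p₋₂ = 0, q₋₂ = 1, p₋₁ = 1, q₋₁ = 0, p_j = a_j p_{j−1} + p_{j−2}, q_j = a_j q_{j−1} + q_{j−2}. Set a_{n+1} := −q_{n−1}/q_n ∈ ℚ and, for −1 ≤ j ≤ n, let τ_j := [[(−1)^{j−1} p_j, p_{j−1}], [(−1)^{j−1} q_j, q_{j−1}]] ∈ SL₂(ℤ). Then in Ξ₀ one has the relation [π₀(∞), π_r(∞)] + Σ_{j=−1}^{n} τ_j·[π_∞((−1)^{j+1} a_{j+1}), π₀(∞)] = 0. -/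
noncomputable section

open scoped MatrixGroups

/-- The projective line over `ℚ`, i.e. `P¹(ℚ)`. -/
abbrev P1 : Type := Projectivization ℚ (Fin 2 → ℚ)

namespace PaperMS

/-- The linear automorphism of `ℚ²` attached to `γ ∈ GL₂(ℚ)`. -/
def glEquiv (γ : GL (Fin 2) ℚ) : (Fin 2 → ℚ) ≃ₗ[ℚ] (Fin 2 → ℚ) :=
  LinearMap.GeneralLinearGroup.generalLinearEquiv ℚ (Fin 2 → ℚ)
    (Matrix.GeneralLinearGroup.toLin γ)

lemma glEquiv_one : glEquiv 1 = LinearEquiv.refl ℚ (Fin 2 → ℚ) := by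
  simp only [glEquiv, map_one]
  rfl

lemma glEquiv_mul (γ δ : GL (Fin 2) ℚ) :
    glEquiv (γ * δ) = (glEquiv δ).trans (glEquiv γ) := by
  simp only [glEquiv, map_mul]
  rfl

/-- The Möbius action of `GL₂(ℚ)` on `P¹(ℚ)`. -/
instance : MulAction (GL (Fin 2) ℚ) P1 where
  smul γ := Projectivization.map (glEquiv γ).toLinearMap (glEquiv γ).injective
  one_smul x := by
    induction x using Projectivization.ind with
    | h v hv =>
      show Projectivization.map _ _ _ = _
      rw [Projectivization.map_mk]
      simp [glEquiv_one]
  mul_smul γ δ x := by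
    induction x using Projectivization.ind with
    | h v hv =>
      show Projectivization.map _ _ _ =
        Projectivization.map _ _ (Projectivization.map _ _ _)
      rw [Projectivization.map_mk, Projectivization.map_mk, Projectivization.map_mk]
      simp [glEquiv_mul]

lemma smul_P1_def (γ : GL (Fin 2) ℚ) (x : P1) :
    γ • x = Projectivization.map (glEquiv γ).toLinearMap (glEquiv γ).injective x := rfl

/-- The point of `P¹(ℚ)` attached to a rational number. -/
def ptQ (x : ℚ) : P1 :=
  Projectivization.mk ℚ ![x, 1] (by
    intro h
    have := congrFun h 1
    simp at this)

/-- The point `∞` of `P¹(ℚ)`. -/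
def ptInf : P1 :=
  Projectivization.mk ℚ ![1, 0] (by
    intro h
    have := congrFun h 0
    simp at this)

lemma ptQ_ne_ptInf (x : ℚ) : ptQ x ≠ ptInf := by
  intro h
  rw [ptQ, ptInf, Projectivization.mk_eq_mk_iff] at h
  obtain ⟨a, ha⟩ := h
  have := congrFun ha 1
  simp at this

/-- The set `𝒫(ℚ)` of infinitesimal cusps `π_r(s)`: ordered pairs of distinct
points of `P¹(ℚ)`; the symbol `π_r(s)` corresponds to the pair `(r, s)`. -/
def PP : Type := {p : P1 × P1 // p.1 ≠ p.2}

/-- The infinitesimal cusp `π_r(s)`. -/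
def pi' (r s : P1) (h : r ≠ s) : PP := ⟨(r, s), h⟩

instance : MulAction (GL (Fin 2) ℚ) PP where
  smul γ p := ⟨(γ • p.val.1, γ • p.val.2), fun h => p.prop (MulAction.injective γ h)⟩
  one_smul p := by
    apply Subtype.ext
    show (((1 : GL (Fin 2) ℚ) • p.val.1, (1 : GL (Fin 2) ℚ) • p.val.2) : P1 × P1) = p.val
    simp
  mul_smul γ δ p := by
    apply Subtype.ext
    show ((((γ * δ) : GL (Fin 2) ℚ) • p.val.1, ((γ * δ) : GL (Fin 2) ℚ) • p.val.2) : P1 × P1) = _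
    simp [mul_smul]
    rfl

/-- `Ξ`, the group of divisors on `𝒫(ℚ)`. -/
abbrev Xi : Type := PP →₀ ℤ

/-- `Δ`, the group of divisors on `P¹(ℚ)`. -/
abbrev Delta : Type := P1 →₀ ℤ

/-- `GL₂(ℚ)` acts on divisors on `𝒫(ℚ)`. -/
instance : MulAction (GL (Fin 2) ℚ) Xi where
  smul γ v := Finsupp.mapDomain (γ • ·) v
  one_smul v := by
    show Finsupp.mapDomain _ _ = _
    simp only [one_smul]
    exact Finsupp.mapDomain_id
  mul_smul γ δ v := by
    show Finsupp.mapDomain _ _ = Finsupp.mapDomain _ (Finsupp.mapDomain _ _)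
    rw [← Finsupp.mapDomain_comp]
    congr 1
    funext x
    simp [mul_smul]

/-- `GL₂(ℚ)` acts on divisors on `P¹(ℚ)`. -/
instance : MulAction (GL (Fin 2) ℚ) Delta where
  smul γ v := Finsupp.mapDomain (γ • ·) v
  one_smul v := by
    show Finsupp.mapDomain _ _ = _
    simp only [one_smul]
    exact Finsupp.mapDomain_id
  mul_smul γ δ v := by
    show Finsupp.mapDomain _ _ = Finsupp.mapDomain _ (Finsupp.mapDomain _ _)
    rw [← Finsupp.mapDomain_comp]
    congr 1
    funext x
    simp [mul_smul]

/-- The degree of a divisor on `𝒫(ℚ)`. -/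
def degXi : Xi →+ ℤ := Finsupp.liftAddHom fun _ => AddMonoidHom.id ℤ

/-- The degree of a divisor on `P¹(ℚ)`. -/
def degDelta : Delta →+ ℤ := Finsupp.liftAddHom fun _ => AddMonoidHom.id ℤ

/-- `Ξ₀`, the subgroup of degree-zero divisors on `𝒫(ℚ)`. -/
def Xi0 : AddSubgroup Xi := degXi.ker

/-- `Δ₀`, the subgroup of degree-zero divisors on `P¹(ℚ)`. -/
def Delta0 : AddSubgroup Delta := degDelta.ker

/-- The divisor attached to a point of `𝒫(ℚ)`. -/
def dv (p : PP) : Xi := Finsupp.single p 1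

/-- The divisor attached to a point of `P¹(ℚ)`. -/
def dvP (r : P1) : Delta := Finsupp.single r 1

/-- `[c₁, c₂] = {c₂} - {c₁} ∈ Ξ₀`. -/
def br (c₁ c₂ : PP) : Xi := dv c₂ - dv c₁

/-- The modular symbol `{r, s} = [π_r(s), π_s(r)]`. -/
def msym (r s : P1) (h : r ≠ s) : Xi := br (pi' r s h) (pi' s r h.symm)

/-- The infinitesimal symbol `[s, t]_r = [π_r(s), π_r(t)]`. -/
def isym (r s t : P1) (hs : s ≠ r) (ht : t ≠ r) : Xi :=
  br (pi' r s hs.symm) (pi' r t ht.symm)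

lemma degXi_single (p : PP) (n : ℤ) : degXi (Finsupp.single p n) = n := by
  simp [degXi]

lemma degDelta_single (r : P1) (n : ℤ) : degDelta (Finsupp.single r n) = n := by
  simp [degDelta]

lemma br_mem_Xi0 (c₁ c₂ : PP) : br c₁ c₂ ∈ Xi0 := by
  simp [br, Xi0, AddMonoidHom.mem_ker, dv, degXi_single]

lemma smul_mem_Xi0 (γ : GL (Fin 2) ℚ) {v : Xi} (hv : v ∈ Xi0) : γ • v ∈ Xi0 := by
  have h : degXi (γ • v) = degXi v := by
    show degXi (Finsupp.mapDomain (γ • ·) v) = degXi v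
    simp only [degXi, Finsupp.liftAddHom_apply]
    exact Finsupp.sum_mapDomain_index (fun _ => rfl) (fun _ _ _ => rfl)
  simpa [Xi0, AddMonoidHom.mem_ker, h] using hv

lemma smul_mem_Delta0 (γ : GL (Fin 2) ℚ) {v : Delta} (hv : v ∈ Delta0) : γ • v ∈ Delta0 := by
  have h : degDelta (γ • v) = degDelta v := by
    show degDelta (Finsupp.mapDomain (γ • ·) v) = degDelta v
    simp only [degDelta, Finsupp.liftAddHom_apply]
    exact Finsupp.sum_mapDomain_index (fun _ => rfl) (fun _ _ _ => rfl)
  simpa [Delta0, AddMonoidHom.mem_ker, h] using hv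

lemma brP_mem_Delta0 (r s : P1) : dvP s - dvP r ∈ Delta0 := by
  simp [Delta0, AddMonoidHom.mem_ker, dvP, degDelta_single]

/-- The boundary map `∂ : Ξ → Δ`, induced by `π_r(s) ↦ r`. -/
def bdry : Xi →+ Delta := Finsupp.mapDomain.addMonoidHom fun p : PP => p.val.1

/-- The embedding of `SL₂(ℤ)` in `GL₂(ℚ)`. -/
def toGLQ : SL(2, ℤ) →* GL (Fin 2) ℚ :=
  Matrix.SpecialLinearGroup.toGL.comp (Matrix.SpecialLinearGroup.map (Int.castRingHom ℚ))

end PaperMS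

namespace PaperMS

/-- Numerators of the convergents of a continued fraction, with shifted indexing:
`cfP a (j+2) = p_j` where `p_{-2} = 0`, `p_{-1} = 1`, `p_j = a_j p_{j-1} + p_{j-2}`. -/
def cfP (a : ℕ → ℤ) : ℕ → ℤ
  | 0 => 0
  | 1 => 1
  | (j+2) => a j * cfP a (j+1) + cfP a j

/-- Denominators of the convergents of a continued fraction, with shifted indexing:
`cfQ a (j+2) = q_j` where `q_{-2} = 1`, `q_{-1} = 0`, `q_j = a_j q_{j-1} + q_{j-2}`. -/
def cfQ (a : ℕ → ℤ) : ℕ → ℤ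
  | 0 => 1
  | 1 => 0
  | (j+2) => a j * cfQ a (j+1) + cfQ a j

/-- The extended sequence of partial quotients: `aQ a n j = a_j` for `j ≤ n` and
`aQ a n (n+1) = a_{n+1} := -q_{n-1}/q_n`. -/
def aQ (a : ℕ → ℤ) (n : ℕ) (j : ℕ) : ℚ :=
  if j ≤ n then (a j : ℚ) else -((cfQ a (n+1) : ℚ) / (cfQ a (n+2) : ℚ))

/-!
In the paper's indexing, `τ_j` sends `0 ↦ p_{j-1}/q_{j-1}`, `∞ ↦ p_j/q_j` and
`(-1)^{j+1} a_{j+1} ↦ p_{j+1}/q_{j+1}`, except that `τ_n` sends `(-1)^{n+1} a_{n+1}` to `∞`: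
this is what the choice `a_{n+1} = -q_{n-1}/q_n` achieves, via
`p_j q_{j-1} - p_{j-1} q_j = (-1)^{j+1}`. Hence `τ_j·π_∞((-1)^{j+1} a_{j+1}) = τ_{j+1}·π_0(∞)`
for `j < n`, so the sum telescopes to `{π_0(∞)} - {π_r(∞)}`, since `τ_{-1} = 1` and
`τ_n·π_∞((-1)^{n+1} a_{n+1}) = π_r(∞)`.
-/

open Matrix

lemma cfP_det (a : ℕ → ℤ) :
    ∀ j, cfP a (j+1) * cfQ a j - cfP a j * cfQ a (j+1) = (-1) ^ j
  | 0 => by simp [cfP, cfQ]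
  | j + 1 => by
    have ih := cfP_det a j
    simp only [cfP, cfQ, pow_succ]
    linear_combination (-1 : ℤ) * ih

lemma cfQ_pos {a : ℕ → ℤ} {n : ℕ} (ha : ∀ j, 1 ≤ j → j ≤ n → 1 ≤ a j) {j : ℕ} (hj : j ≤ n) :
    0 < cfQ a (j+2) := by
  suffices h : ∀ j ≤ n, 0 ≤ cfQ a (j+1) ∧ 0 < cfQ a (j+2) from (h j hj).2
  intro j hj
  induction j with
  | zero => simp [cfQ]
  | succ k ih =>
    obtain ⟨h1, h2⟩ := ih (by omega)
    have hak : 1 ≤ a (k+1) := ha (k+1) (by omega) hj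
    constructor
    · show 0 ≤ cfQ a (k+2)
      omega
    · show 0 < a (k+1) * cfQ a (k+2) + cfQ a (k+1)
      nlinarith

lemma aQ_of_le {a : ℕ → ℤ} {n j : ℕ} (hj : j ≤ n) : aQ a n j = a j := if_pos hj

lemma cfVec_ne_zero (a : ℕ → ℤ) (i : ℕ) : ![(cfP a i : ℚ), cfQ a i] ≠ 0 := by
  intro h
  have hp : cfP a i = 0 := by simpa using congrFun h 0
  have hq : cfQ a i = 0 := by simpa using congrFun h 1
  exact pow_ne_zero i (by norm_num : (-1 : ℤ) ≠ 0) (by simpa [hp, hq] using (cfP_det a i).symm)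

/-- The convergent `p_{i-2}/q_{i-2}` as a point of `P¹(ℚ)`. -/
def cfPoint (a : ℕ → ℤ) (i : ℕ) : P1 :=
  Projectivization.mk ℚ ![(cfP a i : ℚ), cfQ a i] (cfVec_ne_zero a i)

lemma cfPoint_zero (a : ℕ → ℤ) : cfPoint a 0 = ptQ 0 := by
  simp [cfPoint, ptQ, cfP, cfQ]

lemma cfPoint_one (a : ℕ → ℤ) : cfPoint a 1 = ptInf := by
  simp [cfPoint, ptInf, cfP, cfQ]

lemma cfPoint_eq_ptQ {a : ℕ → ℤ} {i : ℕ} (hq : (cfQ a i : ℚ) ≠ 0) :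
    cfPoint a i = ptQ (cfP a i / cfQ a i) := by
  rw [cfPoint, ptQ, Projectivization.mk_eq_mk_iff']
  exact ⟨cfQ a i, by rw [smul_vec2, smul_eq_mul, smul_eq_mul, mul_div_cancel₀ _ hq, mul_one]⟩

lemma smul_mk_eq_mk {γ : GL (Fin 2) ℚ} {u v : Fin 2 → ℚ} (hu : u ≠ 0) (hv : v ≠ 0) (c : ℚ)
    (h : (γ : Matrix (Fin 2) (Fin 2) ℚ) *ᵥ u = c • v) :
    γ • Projectivization.mk ℚ u hu = Projectivization.mk ℚ v hv := by
  rw [smul_P1_def, Projectivization.map_mk, Projectivization.mk_eq_mk_iff']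
  exact ⟨c, by simp [glEquiv, Matrix.GeneralLinearGroup.toLin, h]⟩

lemma smul_pi'_eq_pi' {γ : GL (Fin 2) ℚ} {r s r' s' : P1} (h : r ≠ s) (h' : r' ≠ s')
    (hr : γ • r = r') (hs : γ • s = s') : γ • pi' r s h = pi' r' s' h' :=
  Subtype.ext (Prod.ext hr hs)

lemma smul_pi'_eq_smul_pi' {γ δ : GL (Fin 2) ℚ} {r s r' s' : P1} (h : r ≠ s) (h' : r' ≠ s')
    (hr : γ • r = δ • r') (hs : γ • s = δ • s') : γ • pi' r s h = δ • pi' r' s' h' :=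
  Subtype.ext (Prod.ext hr hs)

lemma smul_dv (γ : GL (Fin 2) ℚ) (c : PP) : γ • dv c = dv (γ • c) :=
  Finsupp.mapDomain_single

lemma smul_br (γ : GL (Fin 2) ℚ) (c₁ c₂ : PP) : γ • br c₁ c₂ = br (γ • c₁) (γ • c₂) := by
  rw [br, br, ← smul_dv, ← smul_dv]
  exact map_sub (Finsupp.mapDomain.addMonoidHom (γ • ·)) _ _

lemma mulVec_vec2 {α : Type*} [NonUnitalNonAssocSemiring α] (A B C D x y : α) :
    !![A, B; C, D] *ᵥ ![x, y] = ![A * x + B * y, C * x + D * y] := by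
  ext k; fin_cases k <;> simp [mulVec, dotProduct, Fin.sum_univ_two]

/-- The matrix `τ_{i-1}` of the paper. -/
def cfMatrix (a : ℕ → ℤ) (i : ℕ) : Matrix (Fin 2) (Fin 2) ℚ :=
  !![(-1 : ℚ)^i * (cfP a (i+1) : ℚ), (cfP a i : ℚ);
     (-1 : ℚ)^i * (cfQ a (i+1) : ℚ), (cfQ a i : ℚ)]

section cfMatrix

variable {a : ℕ → ℤ} {i : ℕ} {γ : GL (Fin 2) ℚ}

lemma smul_ptQ_zero_of_cfMatrix (hγ : (γ : Matrix (Fin 2) (Fin 2) ℚ) = cfMatrix a i) :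
    γ • ptQ 0 = cfPoint a i := by
  refine smul_mk_eq_mk _ _ 1 ?_
  rw [hγ, cfMatrix, mulVec_vec2, one_smul]
  simp

lemma smul_ptInf_of_cfMatrix (hγ : (γ : Matrix (Fin 2) (Fin 2) ℚ) = cfMatrix a i) :
    γ • ptInf = cfPoint a (i+1) := by
  refine smul_mk_eq_mk _ _ ((-1) ^ i) ?_
  rw [hγ, cfMatrix, mulVec_vec2, smul_vec2]
  simp

lemma smul_ptQ_partialQuotient_of_cfMatrix
    (hγ : (γ : Matrix (Fin 2) (Fin 2) ℚ) = cfMatrix a i) :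
    γ • ptQ ((-1) ^ i * a i) = cfPoint a (i+2) := by
  have hs : (-1 : ℚ) ^ i * (-1) ^ i = 1 := by rw [← mul_pow]; norm_num
  refine smul_mk_eq_mk _ _ 1 ?_
  rw [hγ, cfMatrix, mulVec_vec2, one_smul]
  simp only [cfP, cfQ]
  push_cast
  exact vec2_eq (by linear_combination (cfP a (i+1) * a i : ℚ) * hs)
    (by linear_combination (cfQ a (i+1) * a i : ℚ) * hs)

lemma smul_ptQ_last_of_cfMatrix (hγ : (γ : Matrix (Fin 2) (Fin 2) ℚ) = cfMatrix a i)
    (hq : (cfQ a (i+1) : ℚ) ≠ 0) :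
    γ • ptQ ((-1) ^ i * -(cfQ a i / cfQ a (i+1))) = ptInf := by
  have hs : (-1 : ℚ) ^ i * (-1) ^ i = 1 := by rw [← mul_pow]; norm_num
  have hd : (cfP a (i+1) : ℚ) * cfQ a i - cfP a i * cfQ a (i+1) = (-1) ^ i := by
    exact_mod_cast cfP_det a i
  refine smul_mk_eq_mk _ _ (-(-1) ^ i / cfQ a (i+1)) ?_
  rw [hγ, cfMatrix, mulVec_vec2, smul_vec2]
  have hinv : (cfQ a (i+1) : ℚ) * (cfQ a (i+1) : ℚ)⁻¹ = 1 := mul_inv_cancel₀ hq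
  simp only [div_eq_mul_inv]
  refine vec2_eq ?_ ?_
  · linear_combination (-(cfP a (i+1) * cfQ a i * (cfQ a (i+1) : ℚ)⁻¹)) * hs
      - (cfQ a (i+1) : ℚ)⁻¹ * hd - (cfP a i : ℚ) * hinv
  · linear_combination (-(cfQ a i * cfQ a (i+1) * (cfQ a (i+1) : ℚ)⁻¹)) * hs
      - (cfQ a i : ℚ) * hinv

lemma smul_pi'_ptInf_partialQuotient_of_cfMatrix {δ : GL (Fin 2) ℚ}
    (hγ : (γ : Matrix (Fin 2) (Fin 2) ℚ) = cfMatrix a i)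
    (hδ : (δ : Matrix (Fin 2) (Fin 2) ℚ) = cfMatrix a (i+1)) :
    γ • pi' ptInf (ptQ ((-1) ^ i * a i)) (ptQ_ne_ptInf _).symm =
      δ • pi' (ptQ 0) ptInf (ptQ_ne_ptInf 0) :=
  smul_pi'_eq_smul_pi' _ _
    (by rw [smul_ptInf_of_cfMatrix hγ, smul_ptQ_zero_of_cfMatrix hδ])
    (by rw [smul_ptQ_partialQuotient_of_cfMatrix hγ, smul_ptInf_of_cfMatrix hδ])

lemma smul_pi'_ptInf_last_of_cfMatrix (hγ : (γ : Matrix (Fin 2) (Fin 2) ℚ) = cfMatrix a i)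
    (hq : (cfQ a (i+1) : ℚ) ≠ 0) :
    γ • pi' ptInf (ptQ ((-1) ^ i * -(cfQ a i / cfQ a (i+1)))) (ptQ_ne_ptInf _).symm =
      pi' (ptQ (cfP a (i+1) / cfQ a (i+1))) ptInf (ptQ_ne_ptInf _) :=
  smul_pi'_eq_pi' _ _ (by rw [smul_ptInf_of_cfMatrix hγ, cfPoint_eq_ptQ hq])
    (smul_ptQ_last_of_cfMatrix hγ hq)

end cfMatrix

/-- Let `r ∈ ℚ` with continued fraction expansion
`r = a₀ + 1/(a₁ + 1/(⋯ + 1/aₙ))`, with convergents `p_j/q_j`, and set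
`a_{n+1} := -q_{n-1}/q_n` and, for `-1 ≤ j ≤ n`,
`τ_j := [[(-1)^{j-1} p_j, p_{j-1}], [(-1)^{j-1} q_j, q_{j-1}]] ∈ SL₂(ℤ)`.
Then in `Ξ₀` one has
`[π₀(∞), π_r(∞)] + Σ_{j=-1}^{n} τ_j·[π_∞((-1)^{j+1} a_{j+1}), π₀(∞)] = 0`.
(Here the summation index `i = j + 1` runs over `0, …, n+1`.) -/
theorem statement2 (n : ℕ) (a : ℕ → ℤ) (ha : ∀ j, 1 ≤ j → j ≤ n → 1 ≤ a j)
    (r : ℚ) (hr : r = (cfP a (n+2) : ℚ) / (cfQ a (n+2) : ℚ))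
    (τ : ℕ → GL (Fin 2) ℚ)
    (hτ : ∀ i ≤ n+1, ((τ i) : Matrix (Fin 2) (Fin 2) ℚ) =
      !![(-1 : ℚ)^i * (cfP a (i+1) : ℚ), (cfP a i : ℚ);
         (-1 : ℚ)^i * (cfQ a (i+1) : ℚ), (cfQ a i : ℚ)]) :
    br (pi' (ptQ 0) ptInf (ptQ_ne_ptInf 0)) (pi' (ptQ r) ptInf (ptQ_ne_ptInf r)) +
      ∑ i ∈ Finset.range (n+2),
        τ i • br (pi' ptInf (ptQ ((-1 : ℚ)^i * aQ a n i)) (ptQ_ne_ptInf _).symm)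
                 (pi' (ptQ 0) ptInf (ptQ_ne_ptInf 0)) = 0 := by
  have hq : (cfQ a (n+2) : ℚ) ≠ 0 := by exact_mod_cast (cfQ_pos ha le_rfl).ne'
  set c : ℕ → Xi := fun i => dv (τ i • pi' (ptQ 0) ptInf (ptQ_ne_ptInf 0))
  have hfirst : c 0 = dv (pi' (ptQ 0) ptInf (ptQ_ne_ptInf 0)) := by
    refine congrArg dv (smul_pi'_eq_pi' _ _ ?_ ?_)
    · rw [smul_ptQ_zero_of_cfMatrix (hτ 0 (by omega)), cfPoint_zero]
    · rw [smul_ptInf_of_cfMatrix (hτ 0 (by omega)), cfPoint_one]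
  have hstep : ∀ i ∈ Finset.range (n+1),
      τ i • br (pi' ptInf (ptQ ((-1 : ℚ)^i * aQ a n i)) (ptQ_ne_ptInf _).symm)
        (pi' (ptQ 0) ptInf (ptQ_ne_ptInf 0)) = c i - c (i+1) := by
    intro i hi
    have hi : i ≤ n := Finset.mem_range_succ_iff.mp hi
    rw [smul_br, aQ_of_le hi,
      smul_pi'_ptInf_partialQuotient_of_cfMatrix (hτ i (by omega)) (hτ (i+1) (by omega))]
    rfl
  have hlast : τ (n+1) • br (pi' ptInf (ptQ ((-1 : ℚ)^(n+1) * aQ a n (n+1))) (ptQ_ne_ptInf _).symm)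
      (pi' (ptQ 0) ptInf (ptQ_ne_ptInf 0)) = c (n+1) - dv (pi' (ptQ r) ptInf (ptQ_ne_ptInf r)) := by
    rw [smul_br, aQ, if_neg (by omega), smul_pi'_ptInf_last_of_cfMatrix (hτ (n+1) le_rfl) hq, ← hr]
    rfl
  rw [Finset.sum_range_succ, Finset.sum_congr rfl hstep, Finset.sum_range_sub', hlast, hfirst, br]
  abel

end PaperMS
end
end

section
/- Let H ≤ GL₂⁺(ℚ) be a subgroup and let D(H) ⊆ 𝒫(ℚ) be a set of representatives of the H-orbits of 𝒫(ℚ). Let c be a 1-cocycle of H with values in V which vanishes on the stabilizer in H of every element of D(H). Then there exists Ψ ∈ Hom_H(Ξ₀, V) such that Ψ([Z, γ⁻¹·Z]) = c(γ) for every γ ∈ H and every Z ∈ D(H). If moreover H acts transitively on 𝒫(ℚ), then Ψ is unique. -/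
noncomputable section

open scoped MatrixGroups

/-!
Choose, for every `Z ∈ 𝒫(ℚ)`, some `g_Z ∈ H` carrying the representative of its orbit to `Z`,
and put `f(Z) = c(g_Z⁻¹)`. Since `c` vanishes on the stabilizers of the representatives, `f` does
not depend on these choices, vanishes on `D`, and satisfies `f(γZ) = f(Z)|γ⁻¹ + c(γ⁻¹)`. The
`ℤ`-linear extension of `f` to `Ξ` therefore transforms like `Ψ(γx) = Ψ(x)|γ⁻¹ + deg(x) c(γ⁻¹)`, so
its restriction `Ψ` to `Ξ₀` is `H`-equivariant, and `Ψ([Z, γ⁻¹Z]) = f(γ⁻¹Z) - f(Z) = c(γ)`.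
If `H` is transitive, `Ξ₀` is generated by the `[Z, γ⁻¹Z]` for one fixed `Z ∈ D`, whence uniqueness.
-/

namespace PaperMS

section CocycleOnOrbits

variable {G X V : Type*} [Group G] [MulAction G X] [AddCommGroup V]
  {act : G → V →+ V} {c : G → V} {D : Set X}

lemma cocycle_inv_eq_of_smul_eq (hc : ∀ g h, c (g * h) = act h (c g) + c h)
    (hD_inj : ∀ x₁ ∈ D, ∀ x₂ ∈ D, ∀ g : G, g • x₁ = x₂ → x₁ = x₂)
    (hstab : ∀ x ∈ D, ∀ g : G, g • x = x → c g = 0)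
    {x₁ x₂ : X} (hx₁ : x₁ ∈ D) (hx₂ : x₂ ∈ D) {g₁ g₂ : G} (h : g₁ • x₁ = g₂ • x₂) :
    c g₁⁻¹ = c g₂⁻¹ := by
  have hτ : (g₂⁻¹ * g₁) • x₁ = x₂ := by rw [mul_smul, h, inv_smul_smul]
  obtain rfl := hD_inj x₁ hx₁ x₂ hx₂ _ hτ
  have hτ_inv : c (g₂⁻¹ * g₁)⁻¹ = 0 := hstab x₁ hx₁ _ (inv_smul_eq_iff.mpr hτ.symm)
  calc c g₁⁻¹ = c ((g₂⁻¹ * g₁)⁻¹ * g₂⁻¹) := by congr 1; group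
    _ = c g₂⁻¹ := by rw [hc, hτ_inv, map_zero, zero_add]

lemma exists_primitive_of_cocycle_vanishing_on_stabilizers
    (hc : ∀ g h, c (g * h) = act h (c g) + c h)
    (hD_surj : ∀ x, ∃ x₀ ∈ D, ∃ g : G, g • x₀ = x)
    (hD_inj : ∀ x₁ ∈ D, ∀ x₂ ∈ D, ∀ g : G, g • x₁ = x₂ → x₁ = x₂)
    (hstab : ∀ x ∈ D, ∀ g : G, g • x = x → c g = 0) :
    ∃ f : X → V, (∀ x ∈ D, f x = 0) ∧ ∀ (g : G) (x : X), f (g • x) = act g⁻¹ (f x) + c g⁻¹ := by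
  choose r hr g hg using hD_surj
  have hf : ∀ x₀ ∈ D, ∀ h : G, c (g (h • x₀))⁻¹ = c h⁻¹ := fun x₀ hx₀ h =>
    cocycle_inv_eq_of_smul_eq hc hD_inj hstab (hr _) hx₀ (hg _)
  refine ⟨fun x => c (g x)⁻¹, fun x hx => ?_, fun h x => ?_⟩
  · simpa [hstab x hx 1 (one_smul G x)] using hf x hx 1
  · simpa only [mul_smul, hg, mul_inv_rev, hc] using hf (r x) (hr x) (h * g x)

end CocycleOnOrbits

lemma sum_zsmul_eq_zero_of_sum_eq_zero {X M : Type*} [AddCommGroup M] {d : X →₀ ℤ}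
    (hd : (d.sum fun _ n => n) = 0) (v : M) : (d.sum fun _ n => n • v) = 0 := by
  rw [Finsupp.sum, ← Finset.sum_smul]
  exact (congrArg (· • v) hd).trans (zero_smul ℤ v)

lemma linearCombination_mapDomain_of_affine {X V : Type*} [AddCommGroup V] {φ : X → X}
    {A : V →+ V} {b : V} {f : X → V} (hf : ∀ x, f (φ x) = A (f x) + b)
    {d : X →₀ ℤ} (hd : (d.sum fun _ n => n) = 0) :
    Finsupp.linearCombination ℤ f (d.mapDomain φ) = A (Finsupp.linearCombination ℤ f d) := by
  rw [Finsupp.linearCombination_mapDomain]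
  simp only [Finsupp.linearCombination_apply, Function.comp_apply, hf, smul_add,
    Finsupp.sum_add, map_finsuppSum, map_zsmul]
  rw [sum_zsmul_eq_zero_of_sum_eq_zero hd, add_zero]

section Divisors

variable {V : Type*} [AddCommGroup V]

def liftXi0 (f : PP → V) : Xi0 →+ V :=
  (Finsupp.linearCombination ℤ f).toAddMonoidHom.comp Xi0.subtype

lemma liftXi0_br (f : PP → V) (p q : PP) :
    liftXi0 f ⟨br p q, br_mem_Xi0 p q⟩ = f q - f p := by
  simp [liftXi0, br, dv]

lemma liftXi0_smul {f : PP → V} {γ : GL (Fin 2) ℚ} {A : V →+ V} {b : V}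
    (hf : ∀ p, f (γ • p) = A (f p) + b) (x : Xi0) :
    liftXi0 f ⟨γ • (x : Xi), smul_mem_Xi0 γ x.prop⟩ = A (liftXi0 f x) :=
  linearCombination_mapDomain_of_affine hf x.prop

lemma sum_smul_br_eq_self (z : PP) {d : Xi} (hd : d ∈ Xi0) :
    (d.sum fun p n => n • br z p) = d := by
  simp only [br, smul_sub, Finsupp.sum_sub, sum_zsmul_eq_zero_of_sum_eq_zero hd, sub_zero]
  simp [dv]

lemma Xi0_addHom_ext (z : PP) {Ψ Ψ' : Xi0 →+ V}
    (h : ∀ p, Ψ ⟨br z p, br_mem_Xi0 z p⟩ = Ψ' ⟨br z p, br_mem_Xi0 z p⟩) : Ψ = Ψ' := by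
  ext ⟨d, hd⟩
  have hsum : (⟨d, hd⟩ : Xi0) = d.sum fun p n => n • ⟨br z p, br_mem_Xi0 z p⟩ := by
    apply Subtype.ext
    rw [← Xi0.coe_subtype, map_finsuppSum]
    simpa [map_zsmul] using (sum_smul_br_eq_self z hd).symm
  simp only [hsum, map_finsuppSum, map_zsmul, h]

end Divisors

theorem statement5_general (V : Type*) [AddCommGroup V] [Module ℚ V]
    (act : Matrix.GLPos (Fin 2) ℚ → V →ₗ[ℚ] V)
    (H : Subgroup (Matrix.GLPos (Fin 2) ℚ))
    (D : Set PP)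
    (hD_surj : ∀ Z : PP, ∃ Z₀ ∈ D, ∃ γ ∈ H, (γ : GL (Fin 2) ℚ) • Z₀ = Z)
    (hD_inj : ∀ Z₁ ∈ D, ∀ Z₂ ∈ D, (∃ γ ∈ H, (γ : GL (Fin 2) ℚ) • Z₁ = Z₂) → Z₁ = Z₂)
    (c : H → V)
    (hc : ∀ γ δ : H, c (γ * δ) = act δ (c γ) + c δ)
    (hstab : ∀ Z ∈ D, ∀ γ : H,
      ((γ : Matrix.GLPos (Fin 2) ℚ) : GL (Fin 2) ℚ) • Z = Z → c γ = 0) :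
    ∃ Ψ : Xi0 →+ V,
      ((∀ (γ : H) (x : Xi0),
          Ψ ⟨((γ : Matrix.GLPos (Fin 2) ℚ) : GL (Fin 2) ℚ) • (x : Xi),
              smul_mem_Xi0 _ x.prop⟩
            = act ((γ⁻¹ : H) : Matrix.GLPos (Fin 2) ℚ) (Ψ x)) ∧
        ∀ (γ : H), ∀ Z ∈ D,
          Ψ ⟨br Z ((((γ⁻¹ : H) : Matrix.GLPos (Fin 2) ℚ) : GL (Fin 2) ℚ) • Z),
              br_mem_Xi0 _ _⟩ = c γ) ∧
      ((∀ Z₁ Z₂ : PP, ∃ γ ∈ H, (γ : GL (Fin 2) ℚ) • Z₁ = Z₂) →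
        ∀ Ψ' : Xi0 →+ V,
          ((∀ (γ : H) (x : Xi0),
              Ψ' ⟨((γ : Matrix.GLPos (Fin 2) ℚ) : GL (Fin 2) ℚ) • (x : Xi),
                  smul_mem_Xi0 _ x.prop⟩
                = act ((γ⁻¹ : H) : Matrix.GLPos (Fin 2) ℚ) (Ψ' x)) ∧
            ∀ (γ : H), ∀ Z ∈ D,
              Ψ' ⟨br Z ((((γ⁻¹ : H) : Matrix.GLPos (Fin 2) ℚ) : GL (Fin 2) ℚ) • Z),
                  br_mem_Xi0 _ _⟩ = c γ) →
          Ψ' = Ψ) := by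
  obtain ⟨f, hf_D, hf_smul⟩ :=
    exists_primitive_of_cocycle_vanishing_on_stabilizers (G := H)
      (act := fun γ : H => (act γ).toAddMonoidHom) hc
      (fun Z => by obtain ⟨Z₀, hZ₀, γ, hγ, h⟩ := hD_surj Z; exact ⟨Z₀, hZ₀, ⟨γ, hγ⟩, h⟩)
      (fun Z₁ h₁ Z₂ h₂ γ h => hD_inj Z₁ h₁ Z₂ h₂ ⟨γ, γ.2, h⟩) hstab
  have hΨ_br : ∀ (γ : H), ∀ Z ∈ D,
      liftXi0 f ⟨br Z ((((γ⁻¹ : H) : Matrix.GLPos (Fin 2) ℚ) : GL (Fin 2) ℚ) • Z),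
        br_mem_Xi0 _ _⟩ = c γ := by
    intro γ Z hZ
    rw [liftXi0_br, hf_D Z hZ, sub_zero]
    exact (hf_smul γ⁻¹ Z).trans (by simp [hf_D Z hZ])
  refine ⟨liftXi0 f, ⟨fun γ x => liftXi0_smul (hf_smul γ) x, hΨ_br⟩, ?_⟩
  rintro htrans Ψ' ⟨-, hΨ'_br⟩
  obtain ⟨z, hz, -⟩ := hD_surj (pi' (ptQ 0) ptInf (ptQ_ne_ptInf 0))
  refine Xi0_addHom_ext z fun p => ?_
  obtain ⟨γ, hγ, rfl⟩ := htrans z p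
  simpa using (hΨ'_br ⟨γ, hγ⟩⁻¹ z hz).trans (hΨ_br ⟨γ, hγ⟩⁻¹ z hz).symm

/-- Let `H ≤ GL₂⁺(ℚ)` and let `D ⊆ 𝒫(ℚ)` be a set of representatives of
the `H`-orbits of `𝒫(ℚ)`.  Let `c` be a `1`-cocycle of `H` with values in a right
`GL₂⁺(ℚ)`-module `V` which vanishes on the stabilizer in `H` of every element of `D`.
Then there exists `Ψ ∈ Hom_H(Ξ₀, V)` with `Ψ([Z, γ⁻¹·Z]) = c(γ)` for every `γ ∈ H` and
every `Z ∈ D`; and if `H` acts transitively on `𝒫(ℚ)`, such a `Ψ` is unique. -/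
theorem statement5 (V : Type*) [AddCommGroup V] [Module ℚ V]
    (act : Matrix.GLPos (Fin 2) ℚ → V →ₗ[ℚ] V)
    (hact_one : act 1 = LinearMap.id)
    (hact_mul : ∀ γ δ : Matrix.GLPos (Fin 2) ℚ, act (γ * δ) = (act δ).comp (act γ))
    (H : Subgroup (Matrix.GLPos (Fin 2) ℚ))
    (D : Set PP)
    (hD_surj : ∀ Z : PP, ∃ Z₀ ∈ D, ∃ γ ∈ H, (γ : GL (Fin 2) ℚ) • Z₀ = Z)
    (hD_inj : ∀ Z₁ ∈ D, ∀ Z₂ ∈ D, (∃ γ ∈ H, (γ : GL (Fin 2) ℚ) • Z₁ = Z₂) → Z₁ = Z₂)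
    (c : H → V)
    (hc : ∀ γ δ : H, c (γ * δ) = act δ (c γ) + c δ)
    (hstab : ∀ Z ∈ D, ∀ γ : H,
      ((γ : Matrix.GLPos (Fin 2) ℚ) : GL (Fin 2) ℚ) • Z = Z → c γ = 0) :
    ∃ Ψ : Xi0 →+ V,
      ((∀ (γ : H) (x : Xi0),
          Ψ ⟨((γ : Matrix.GLPos (Fin 2) ℚ) : GL (Fin 2) ℚ) • (x : Xi),
              smul_mem_Xi0 _ x.prop⟩
            = act ((γ⁻¹ : H) : Matrix.GLPos (Fin 2) ℚ) (Ψ x)) ∧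
        ∀ (γ : H), ∀ Z ∈ D,
          Ψ ⟨br Z ((((γ⁻¹ : H) : Matrix.GLPos (Fin 2) ℚ) : GL (Fin 2) ℚ) • Z),
              br_mem_Xi0 _ _⟩ = c γ) ∧
      ((∀ Z₁ Z₂ : PP, ∃ γ ∈ H, (γ : GL (Fin 2) ℚ) • Z₁ = Z₂) →
        ∀ Ψ' : Xi0 →+ V,
          ((∀ (γ : H) (x : Xi0),
              Ψ' ⟨((γ : Matrix.GLPos (Fin 2) ℚ) : GL (Fin 2) ℚ) • (x : Xi),
                  smul_mem_Xi0 _ x.prop⟩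
                = act ((γ⁻¹ : H) : Matrix.GLPos (Fin 2) ℚ) (Ψ' x)) ∧
            ∀ (γ : H), ∀ Z ∈ D,
              Ψ' ⟨br Z ((((γ⁻¹ : H) : Matrix.GLPos (Fin 2) ℚ) : GL (Fin 2) ℚ) • Z),
                  br_mem_Xi0 _ _⟩ = c γ) →
          Ψ' = Ψ) :=
  statement5_general V act H D hD_surj hD_inj c hc hstab

end PaperMS
end
end

section
/- Fix Z ∈ 𝒫(ℚ). The map U_Z : Hom_Γ(Ξ₀, V) → H¹(Γ, V) sending Ψ to the class of the 1-cocycle γ ↦ Ψ([Z, γ⁻¹·Z]) is surjective. Moreover, for any r ∈ P¹(ℚ), the image of the map Hom_Γ(Δ₀, V) → H¹(Γ, V) sending Φ to the class of the 1-cocycle γ ↦ Φ({γ⁻¹·r} − {r}) equals the parabolic cohomology H¹_par(Γ, V), defined as the kernel of the restriction map H¹(Γ, V) → ∏_{s ∈ C(Γ)} H¹(Stab_Γ(s), V), where C(Γ) is a set of representatives of the Γ-orbits of P¹(ℚ). -/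
noncomputable section

open scoped MatrixGroups

namespace PaperMS


/-!
A cocycle `c` whose restriction to the stabilizer of every point of a `Γ`-set `X` is a
coboundary becomes a coboundary in the coinduced module `X → V`: on an orbit representative `t`
with `c τ = v|τ - v` on `Stab_Γ(t)`, set `g (σ • t) = c σ⁻¹ - v|σ⁻¹`, which is well defined
exactly because of the local condition. The `ℤ`-linear extension of `g` is `Γ`-equivariant on
divisors of degree zero and sends `{γ⁻¹ • x} - {x}` to `c γ` up to the coboundary of `g x`.

On `𝒫(ℚ)` the local condition is automatic: an element of `SL₂(ℤ)` fixing two distinct cusps has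
two independent rational eigenvectors, whose eigenvalues are rational roots of
`x² - (tr γ) x + 1`, hence both equal to `±1`; so `γ = ±1`, and `c (±1) = 0` because `-1` acts
trivially on the `ℚ`-vector space `V`. On `P¹(ℚ)` the local condition is parabolicity, and
conversely `Φ ({r} - {s})` trivializes a cocycle coming from `Φ ∈ Hom_Γ(Δ₀, V)` on `Stab_Γ(s)`.
-/

open scoped Matrix

section Cocycle

variable {G X R V : Type*} [Group G] [MulAction G X] [Ring R] [AddCommGroup V] [Module R V]

def IsCocycle (act : G → V →ₗ[R] V) (c : G → V) : Prop :=
  ∀ γ δ, c (γ * δ) = act δ (c γ) + c δ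

/-- When `c 1 = 0`, this says that `c γ` is the constant function `g - g|γ` for the right
action `(g|γ) s = act γ (g (γ • s))` of `G` on `X → V`. -/
def IsPrimitive (act : G → V →ₗ[R] V) (c : G → V) (g : X → V) : Prop :=
  ∀ δ s, g (δ • s) = act δ⁻¹ (g s) + c δ⁻¹

variable {act : G → V →ₗ[R] V} {c : G → V}

namespace IsCocycle

theorem apply_one (hc : IsCocycle act c) (hact_one : act 1 = LinearMap.id) : c 1 = 0 := by
  simpa [hact_one] using hc 1 1

theorem apply_eq_zero_of_mul_self_eq_one [Module ℚ V] (hc : IsCocycle act c)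
    (hact_one : act 1 = LinearMap.id) {γ : G} (hγ : γ * γ = 1) (hactγ : act γ = LinearMap.id) :
    c γ = 0 := by
  have h := hc γ γ
  rw [hγ, hc.apply_one hact_one, hactγ, LinearMap.id_apply, ← two_smul ℚ] at h
  exact (smul_eq_zero.mp h.symm).resolve_left two_ne_zero

theorem sub_act_inv_mul (hc : IsCocycle act c)
    (hact_mul : ∀ γ δ, act (γ * δ) = (act δ).comp (act γ)) (δ γ : G) (v : V) :
    c (δ * γ)⁻¹ - act (δ * γ)⁻¹ v = act δ⁻¹ (c γ⁻¹ - act γ⁻¹ v) + c δ⁻¹ := by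
  rw [mul_inv_rev, hc, hact_mul, LinearMap.comp_apply, map_sub]
  abel

theorem sub_act_inv_eq_of_smul_eq (hc : IsCocycle act c)
    (hact_mul : ∀ γ δ, act (γ * δ) = (act δ).comp (act γ)) {t : X} {v : V}
    (hv : ∀ τ : G, τ • t = t → c τ = act τ v - v) {γ γ' : G} (h : γ • t = γ' • t) :
    c γ⁻¹ - act γ⁻¹ v = c γ'⁻¹ - act γ'⁻¹ v := by
  obtain ⟨τ, rfl⟩ : ∃ τ, γ' = γ * τ := ⟨γ⁻¹ * γ', by group⟩
  have hτ : τ⁻¹ • t = t := by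
    rw [mul_smul, smul_left_cancel_iff] at h
    rw [inv_smul_eq_iff, ← h]
  conv_lhs => rw [← mul_one γ]
  rw [sub_act_inv_mul hc hact_mul, sub_act_inv_mul hc hact_mul, inv_one, hv 1 (one_smul G t),
    hv τ⁻¹ hτ, sub_sub_cancel_left, sub_sub_cancel_left]

theorem exists_isPrimitive (hc : IsCocycle act c)
    (hact_mul : ∀ γ δ, act (γ * δ) = (act δ).comp (act γ)) {C : Set X}
    (hC_surj : ∀ s : X, ∃ t ∈ C, ∃ γ : G, γ • t = s)
    (hC_inj : ∀ t₁ ∈ C, ∀ t₂ ∈ C, ∀ γ : G, γ • t₁ = t₂ → t₁ = t₂)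
    (hpar : ∀ t ∈ C, ∃ v : V, ∀ γ : G, γ • t = t → c γ = act γ v - v) :
    ∃ g : X → V, IsPrimitive act c g := by
  choose t ht σ hσ using hC_surj
  choose! v hv using hpar
  refine ⟨fun s => c (σ s)⁻¹ - act (σ s)⁻¹ (v (t s)), fun δ s => ?_⟩
  have hts : t (δ • s) = t s := by
    refine hC_inj _ (ht _) _ (ht s) ((δ * σ s)⁻¹ * σ (δ • s)) ?_
    rw [mul_smul, hσ, inv_smul_eq_iff, mul_smul, hσ]
  have hσδ : σ (δ • s) • t s = (δ * σ s) • t s := by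
    rw [mul_smul, hσ, ← hts, hσ]
  dsimp only
  rw [hts, hc.sub_act_inv_eq_of_smul_eq hact_mul (hv _ (ht s)) hσδ,
    hc.sub_act_inv_mul hact_mul]

theorem exists_isPrimitive_of_forall (hc : IsCocycle act c)
    (hact_mul : ∀ γ δ, act (γ * δ) = (act δ).comp (act γ))
    (hstab : ∀ s : X, ∃ v : V, ∀ γ : G, γ • s = s → c γ = act γ v - v) :
    ∃ g : X → V, IsPrimitive act c g := by
  refine hc.exists_isPrimitive hact_mul
    (C := Set.range (Quotient.out : MulAction.orbitRel.Quotient G X → X))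
    (fun s => ⟨_, ⟨Quotient.mk'' s, rfl⟩,
      MulAction.mem_orbit_symm.mp (Quotient.mk_out' (s₁ := MulAction.orbitRel G X) s)⟩)
    ?_ (fun t _ => hstab t)
  rintro _ ⟨q₁, rfl⟩ _ ⟨q₂, rfl⟩ γ h
  obtain rfl : q₂ = q₁ := by
    rw [← Quotient.out_eq' q₂, ← Quotient.out_eq' q₁]
    exact Quotient.sound' (MulAction.mem_orbit_iff.mpr ⟨γ, h⟩)
  rfl

end IsCocycle

namespace IsPrimitive

variable {g : X → V}

theorem linearCombination_mapDomain_smul (hg : IsPrimitive act c g) (δ : G) (x : X →₀ ℤ) :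
    Finsupp.linearCombination ℤ g (x.mapDomain (δ • ·)) =
      act δ⁻¹ (Finsupp.linearCombination ℤ g x) + x.degree • c δ⁻¹ := by
  induction x using Finsupp.induction_linear with
  | zero => simp
  | add x y hx hy =>
    rw [Finsupp.mapDomain_add, map_add, hx, hy, map_add, map_add, map_add, add_smul]
    abel
  | single s n =>
    rw [Finsupp.mapDomain_single, Finsupp.linearCombination_single,
      Finsupp.linearCombination_single, Finsupp.degree_single, hg, smul_add, map_zsmul]

theorem linearCombination_mapDomain_smul_of_degree_eq_zero (hg : IsPrimitive act c g) (δ : G)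
    {x : X →₀ ℤ} (hx : x.degree = 0) :
    Finsupp.linearCombination ℤ g (x.mapDomain (δ • ·)) =
      act δ⁻¹ (Finsupp.linearCombination ℤ g x) := by
  rw [hg.linearCombination_mapDomain_smul, hx, zero_smul, add_zero]

theorem linearCombination_single_inv_smul_sub (hg : IsPrimitive act c g) (δ : G) (s : X) :
    Finsupp.linearCombination ℤ g (Finsupp.single (δ⁻¹ • s) 1 - Finsupp.single s 1) =
      c δ + (act δ (g s) - g s) := by
  rw [map_sub, Finsupp.linearCombination_single, Finsupp.linearCombination_single, one_smul,
    one_smul, hg, inv_inv]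
  abel

end IsPrimitive

end Cocycle

theorem eq_one_or_neg_one_and_two_mul_eq_of_sq_sub_mul_add_one_eq_zero {a : ℚ} {t : ℤ}
    (h : a ^ 2 - t * a + 1 = 0) : (a = 1 ∨ a = -1) ∧ 2 * a = t := by
  have hint : IsIntegral ℤ a := by
    refine ⟨Polynomial.X ^ 2 - Polynomial.C t * Polynomial.X + 1, by monicity!, ?_⟩
    simp only [Polynomial.eval₂_add, Polynomial.eval₂_sub, Polynomial.eval₂_mul,
      Polynomial.eval₂_pow, Polynomial.eval₂_X, Polynomial.eval₂_C, Polynomial.eval₂_one]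
    simpa using h
  obtain ⟨n, rfl⟩ := IsIntegrallyClosed.isIntegral_iff.mp hint
  rw [algebraMap_int_eq, eq_intCast] at h ⊢
  have hn : n * (t - n) = 1 := by
    have : ((n * (t - n) : ℤ) : ℚ) = 1 := by push_cast; linear_combination -h
    exact_mod_cast this
  have : (n = 1 ∨ n = -1) ∧ 2 * n = t := by
    rcases Int.eq_one_or_neg_one_of_mul_eq_one' hn with h | h <;> omega
  exact_mod_cast this

theorem glEquiv_toGLQ_apply (γ : SL(2, ℤ)) (v : Fin 2 → ℚ) :
    glEquiv (toGLQ γ) v = (γ : Matrix (Fin 2) (Fin 2) ℤ).map (Int.cast : ℤ → ℚ) *ᵥ v :=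
  congrArg (fun f => f v) (Matrix.GeneralLinearGroup.coe_toLin (toGLQ γ))

theorem exists_mulVec_rep_eq_smul_of_smul_eq {γ : SL(2, ℤ)} {x : P1} (hx : toGLQ γ • x = x) :
    ∃ a : ℚ, (γ : Matrix (Fin 2) (Fin 2) ℤ).map (Int.cast : ℤ → ℚ) *ᵥ x.rep = a • x.rep := by
  rw [← x.mk_rep, smul_P1_def, Projectivization.map_mk, Projectivization.mk_eq_mk_iff'] at hx
  obtain ⟨a, ha⟩ := hx
  exact ⟨a, by rw [← glEquiv_toGLQ_apply]; exact ha.symm⟩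

theorem mul_self_eq_trace_smul_sub_det_smul {K : Type*} [CommRing K]
    (M : Matrix (Fin 2) (Fin 2) K) :
    M * M = M.trace • M - M.det • 1 := by
  ext i j
  fin_cases i <;> fin_cases j <;>
    simp [Matrix.mul_apply, Fin.sum_univ_two, Matrix.trace_fin_two, Matrix.det_fin_two] <;> ring

theorem sq_sub_trace_mul_add_one_eq_zero {K : Type*} [Field K] {M : Matrix (Fin 2) (Fin 2) K}
    (hM : M.det = 1) {v : Fin 2 → K} (hv : v ≠ 0) {a : K} (hav : M *ᵥ v = a • v) :
    a ^ 2 - M.trace * a + 1 = 0 := by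
  have h : (a ^ 2) • v = (M.trace * a - 1) • v := by
    calc (a ^ 2) • v = M *ᵥ (M *ᵥ v) := by
          rw [hav, Matrix.mulVec_smul, hav, smul_smul, sq]
      _ = (M.trace * a - 1) • v := by
          rw [Matrix.mulVec_mulVec, mul_self_eq_trace_smul_sub_det_smul, hM, Matrix.sub_mulVec,
            Matrix.smul_mulVec, hav, one_smul, Matrix.one_mulVec, smul_smul, sub_smul, one_smul]
  rw [← sub_eq_zero, ← sub_smul] at h
  linear_combination (smul_eq_zero.mp h).resolve_right hv

theorem eq_one_or_eq_neg_one_of_smul_eq_of_smul_eq {γ : SL(2, ℤ)} {x y : P1} (hxy : x ≠ y)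
    (hx : toGLQ γ • x = x) (hy : toGLQ γ • y = y) : γ = 1 ∨ γ = -1 := by
  obtain ⟨a, ha⟩ := exists_mulVec_rep_eq_smul_of_smul_eq hx
  obtain ⟨b, hb⟩ := exists_mulVec_rep_eq_smul_of_smul_eq hy
  set M := (γ : Matrix (Fin 2) (Fin 2) ℤ).map (Int.cast : ℤ → ℚ) with hM
  have hdet : M.det = 1 := by
    simpa using ((Int.castRingHom ℚ).map_det (γ : Matrix (Fin 2) (Fin 2) ℤ)).symm
  have htr : M.trace = ((γ : Matrix (Fin 2) (Fin 2) ℤ).trace : ℚ) := by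
    simp [hM, Matrix.trace_fin_two]
  obtain ⟨ha1, hta⟩ := eq_one_or_neg_one_and_two_mul_eq_of_sq_sub_mul_add_one_eq_zero
    (htr ▸ sq_sub_trace_mul_add_one_eq_zero hdet x.rep_nonzero ha)
  obtain ⟨-, htb⟩ := eq_one_or_neg_one_and_two_mul_eq_of_sq_sub_mul_add_one_eq_zero
    (htr ▸ sq_sub_trace_mul_add_one_eq_zero hdet y.rep_nonzero hb)
  obtain rfl : a = b := by linarith
  have hMa : M = a • 1 := by
    let B := basisOfLinearIndependentOfCardEqFinrank
      (Projectivization.linearIndependent_pair_iff_ne.mpr hxy) (by simp)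
    apply Matrix.toLin'.injective
    refine B.ext fun i => ?_
    fin_cases i <;>
      simp only [B, coe_basisOfLinearIndependentOfCardEqFinrank, Matrix.toLin'_apply,
        Matrix.smul_mulVec, Matrix.one_mulVec] <;> assumption
  rcases ha1 with rfl | rfl <;> [left; right] <;>
    exact Subtype.ext (Matrix.map_injective Int.cast_injective
      (show M = _ by simp [hMa, Matrix.map_neg]))

instance {X : Type*} [MulAction (GL (Fin 2) ℚ) X] (Γ : Subgroup SL(2, ℤ)) : MulAction Γ X :=
  MulAction.compHom X (toGLQ.comp Γ.subtype)

theorem smul_dvP_sub_dvP (g : GL (Fin 2) ℚ) (r s : P1) :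
    g • (dvP r - dvP s) = dvP (g • r) - dvP (g • s) :=
  Finsupp.mapDomain_sub.trans
    (by rw [dvP, dvP, Finsupp.mapDomain_single, Finsupp.mapDomain_single]; rfl)

section SL2

variable {Γ : Subgroup SL(2, ℤ)} {V : Type*} [AddCommGroup V] [Module ℚ V]
  {act : SL(2, ℤ) → V →ₗ[ℚ] V} {c : Γ → V}

theorem IsCocycle.apply_eq_zero_of_coe_eq_one_or_eq_neg_one
    (hc : IsCocycle (fun γ : Γ => act γ) c)
    (hact_one : act 1 = LinearMap.id) (hact_neg : act (-1) = LinearMap.id)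
    {γ : Γ} (hγ : (γ : SL(2, ℤ)) = 1 ∨ (γ : SL(2, ℤ)) = -1) : c γ = 0 := by
  rcases hγ with hγ | hγ
  · obtain rfl : γ = 1 := Subtype.ext hγ
    exact hc.apply_one hact_one
  · exact hc.apply_eq_zero_of_mul_self_eq_one hact_one
      (Subtype.ext (by simp [hγ])) (by simpa [hγ] using hact_neg)

theorem exists_isPrimitive_on_PP (hc : IsCocycle (fun γ : Γ => act γ) c)
    (hact_one : act 1 = LinearMap.id)
    (hact_mul : ∀ γ δ : SL(2, ℤ), act (γ * δ) = (act δ).comp (act γ))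
    (hact_neg : act (-1) = LinearMap.id) :
    ∃ g : PP → V, IsPrimitive (fun γ : Γ => act γ) c g := by
  refine hc.exists_isPrimitive_of_forall (fun γ δ => hact_mul γ δ) fun s => ⟨0, fun γ hγ => ?_⟩
  have hγ' := eq_one_or_eq_neg_one_of_smul_eq_of_smul_eq s.prop
    (congrArg (fun p : PP => p.val.1) hγ) (congrArg (fun p : PP => p.val.2) hγ)
  simpa using hc.apply_eq_zero_of_coe_eq_one_or_eq_neg_one hact_one hact_neg hγ'

theorem exists_coboundary_on_stabilizer_of_hom_Delta0 (Φ : Delta0 →+ V)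
    (hΦ : ∀ (γ : Γ) (x : Delta0),
      Φ ⟨toGLQ (γ : SL(2, ℤ)) • (x : Delta), smul_mem_Delta0 _ x.prop⟩
        = act ((γ : SL(2, ℤ))⁻¹) (Φ x))
    {r : P1} {v : V}
    (hv : ∀ γ : Γ, Φ ⟨dvP (toGLQ ((γ : SL(2, ℤ))⁻¹) • r) - dvP r, brP_mem_Delta0 _ _⟩
      = c γ + (act (γ : SL(2, ℤ)) v - v))
    (s : P1) : ∃ w : V, ∀ γ : Γ, toGLQ (γ : SL(2, ℤ)) • s = s → c γ = act γ w - w := by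
  let x : Delta0 := ⟨dvP r - dvP s, brP_mem_Delta0 s r⟩
  refine ⟨Φ x - v, fun γ hγ => ?_⟩
  have hγs : toGLQ ((γ : SL(2, ℤ))⁻¹) • s = s := by rw [map_inv, inv_smul_eq_iff, hγ]
  have hx : (⟨dvP (toGLQ ((γ : SL(2, ℤ))⁻¹) • r) - dvP r, brP_mem_Delta0 _ _⟩ : Delta0) =
      ⟨toGLQ ((γ⁻¹ : Γ) : SL(2, ℤ)) • (x : Delta), smul_mem_Delta0 _ x.prop⟩ - x := by
    ext1
    simp only [x, InvMemClass.coe_inv, smul_dvP_sub_dvP, hγs, AddSubgroup.coe_sub]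
    abel
  have h := hv γ
  rw [hx, map_sub, hΦ, InvMemClass.coe_inv, inv_inv] at h
  rw [map_sub, eq_sub_of_add_eq h.symm]
  abel

end SL2

theorem statement6_general (Γ : Subgroup SL(2, ℤ))
    (V : Type*) [AddCommGroup V] [Module ℚ V]
    (act : SL(2, ℤ) → V →ₗ[ℚ] V)
    (hact_one : act 1 = LinearMap.id)
    (hact_mul : ∀ γ δ : SL(2, ℤ), act (γ * δ) = (act δ).comp (act γ))
    (hact_neg : act (-1) = LinearMap.id)
    (Z : PP) (r : P1)
    (C : Set P1)
    (hC_surj : ∀ s : P1, ∃ t ∈ C, ∃ γ ∈ Γ, toGLQ γ • t = s)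
    (hC_inj : ∀ t₁ ∈ C, ∀ t₂ ∈ C, (∃ γ ∈ Γ, toGLQ γ • t₁ = t₂) → t₁ = t₂) :
    (∀ c : Γ → V, (∀ γ δ : Γ, c (γ * δ) = act (δ : SL(2, ℤ)) (c γ) + c δ) →
      ∃ Ψ : Xi0 →+ V,
        (∀ (γ : Γ) (x : Xi0),
            Ψ ⟨toGLQ (γ : SL(2, ℤ)) • (x : Xi), smul_mem_Xi0 _ x.prop⟩
              = act ((γ : SL(2, ℤ))⁻¹) (Ψ x)) ∧
        ∃ v : V, ∀ γ : Γ,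
          Ψ ⟨br Z (toGLQ ((γ : SL(2, ℤ))⁻¹) • Z), br_mem_Xi0 _ _⟩
            = c γ + (act (γ : SL(2, ℤ)) v - v)) ∧
    (∀ c : Γ → V, (∀ γ δ : Γ, c (γ * δ) = act (δ : SL(2, ℤ)) (c γ) + c δ) →
      ((∃ Φ : Delta0 →+ V,
          (∀ (γ : Γ) (x : Delta0),
              Φ ⟨toGLQ (γ : SL(2, ℤ)) • (x : Delta), smul_mem_Delta0 _ x.prop⟩
                = act ((γ : SL(2, ℤ))⁻¹) (Φ x)) ∧
          ∃ v : V, ∀ γ : Γ,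
            Φ ⟨dvP (toGLQ ((γ : SL(2, ℤ))⁻¹) • r) - dvP r, brP_mem_Delta0 _ _⟩
              = c γ + (act (γ : SL(2, ℤ)) v - v)) ↔
        (∀ s ∈ C, ∃ v : V, ∀ γ : Γ,
          toGLQ (γ : SL(2, ℤ)) • s = s → c γ = act (γ : SL(2, ℤ)) v - v))) := by
  refine ⟨fun c hc => ?_, fun c hc => ⟨fun ⟨Φ, hΦ, v, hv⟩ s _ =>
    exists_coboundary_on_stabilizer_of_hom_Delta0 Φ hΦ hv s, fun hpar => ?_⟩⟩
  · obtain ⟨g, hg⟩ := exists_isPrimitive_on_PP hc hact_one hact_mul hact_neg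
    exact ⟨(Finsupp.linearCombination ℤ g).toAddMonoidHom.comp Xi0.subtype,
      fun γ x => hg.linearCombination_mapDomain_smul_of_degree_eq_zero γ x.prop,
      g Z, fun γ => hg.linearCombination_single_inv_smul_sub γ Z⟩
  · obtain ⟨g, hg⟩ := IsCocycle.exists_isPrimitive (act := fun γ : Γ => act γ) hc
      (fun γ δ => hact_mul γ δ)
      (fun s => let ⟨t, ht, γ, hγ, h⟩ := hC_surj s; ⟨t, ht, ⟨γ, hγ⟩, h⟩)
      (fun t₁ h₁ t₂ h₂ γ h => hC_inj t₁ h₁ t₂ h₂ ⟨γ, γ.2, h⟩) hpar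
    exact ⟨(Finsupp.linearCombination ℤ g).toAddMonoidHom.comp Delta0.subtype,
      fun γ x => hg.linearCombination_mapDomain_smul_of_degree_eq_zero γ x.prop,
      g r, fun γ => hg.linearCombination_single_inv_smul_sub γ r⟩

/-- Let `Γ` be a congruence subgroup of `SL₂(ℤ)` and `V` a `ℚ`-vector
space with a right `SL₂(ℤ)`-action in which `-Id` acts trivially.  Fix `Z ∈ 𝒫(ℚ)` and
`r ∈ P¹(ℚ)`.  First, the map `U_Z : Hom_Γ(Ξ₀, V) → H¹(Γ, V)`, `Ψ ↦ [γ ↦ Ψ([Z, γ⁻¹·Z])]`,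
is surjective: every `1`-cocycle of `Γ` is cohomologous to the cocycle attached to some
`Ψ ∈ Hom_Γ(Ξ₀, V)`.  Second, the image in `H¹(Γ, V)` of `Hom_Γ(Δ₀, V)` (via
`Φ ↦ [γ ↦ Φ({γ⁻¹·r} - {r})]`) is exactly the parabolic cohomology `H¹_par(Γ, V)`: the
classes whose restriction to `Stab_Γ(s)` is trivial for every `s` in a set `C` of
representatives of the `Γ`-orbits of `P¹(ℚ)`. -/
theorem statement6 (Γ : Subgroup SL(2, ℤ))
    (hΓ : ∃ N : ℕ, 0 < N ∧ CongruenceSubgroup.Gamma N ≤ Γ)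
    (V : Type*) [AddCommGroup V] [Module ℚ V]
    (act : SL(2, ℤ) → V →ₗ[ℚ] V)
    (hact_one : act 1 = LinearMap.id)
    (hact_mul : ∀ γ δ : SL(2, ℤ), act (γ * δ) = (act δ).comp (act γ))
    (hact_neg : act (-1) = LinearMap.id)
    (Z : PP) (r : P1)
    (C : Set P1)
    (hC_surj : ∀ s : P1, ∃ t ∈ C, ∃ γ ∈ Γ, toGLQ γ • t = s)
    (hC_inj : ∀ t₁ ∈ C, ∀ t₂ ∈ C, (∃ γ ∈ Γ, toGLQ γ • t₁ = t₂) → t₁ = t₂) :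
    (∀ c : Γ → V, (∀ γ δ : Γ, c (γ * δ) = act (δ : SL(2, ℤ)) (c γ) + c δ) →
      ∃ Ψ : Xi0 →+ V,
        (∀ (γ : Γ) (x : Xi0),
            Ψ ⟨toGLQ (γ : SL(2, ℤ)) • (x : Xi), smul_mem_Xi0 _ x.prop⟩
              = act ((γ : SL(2, ℤ))⁻¹) (Ψ x)) ∧
        ∃ v : V, ∀ γ : Γ,
          Ψ ⟨br Z (toGLQ ((γ : SL(2, ℤ))⁻¹) • Z), br_mem_Xi0 _ _⟩
            = c γ + (act (γ : SL(2, ℤ)) v - v)) ∧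
    (∀ c : Γ → V, (∀ γ δ : Γ, c (γ * δ) = act (δ : SL(2, ℤ)) (c γ) + c δ) →
      ((∃ Φ : Delta0 →+ V,
          (∀ (γ : Γ) (x : Delta0),
              Φ ⟨toGLQ (γ : SL(2, ℤ)) • (x : Delta), smul_mem_Delta0 _ x.prop⟩
                = act ((γ : SL(2, ℤ))⁻¹) (Φ x)) ∧
          ∃ v : V, ∀ γ : Γ,
            Φ ⟨dvP (toGLQ ((γ : SL(2, ℤ))⁻¹) • r) - dvP r, brP_mem_Delta0 _ _⟩
              = c γ + (act (γ : SL(2, ℤ)) v - v)) ↔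
        (∀ s ∈ C, ∃ v : V, ∀ γ : Γ,
          toGLQ (γ : SL(2, ℤ)) • s = s → c γ = act (γ : SL(2, ℤ)) v - v))) :=
  statement6_general Γ V act hact_one hact_mul hact_neg Z r C hC_surj hC_inj
end PaperMS
end
end

section
/- Let N ≥ 1, let k ≥ 2 and let F be a modular form of weight k and level Γ(N). For 0 ≤ j ≤ k−2 and τ ∈ ℍ define the Eichler integral W_j(F)(τ) := −i·∫₀^∞ (F(τ+iu) − a₀(F))·(τ+iu)^j du + a₀(F)·τ^{j+1}/(j+1). Then the integral converges absolutely for every τ ∈ ℍ, and W_j(F) is holomorphic on ℍ with complex derivative (d/dτ) W_j(F)(τ) = F(τ)·τ^j. -/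
/-
Put `g z = (F z - a₀) z ^ j`. Since `F` is invariant under `z ↦ z + N`, `F - a₀` decays
exponentially as `Im z → ∞`; continuity on compact rectangles then makes `g` decay exponentially
on every vertical half-strip `[a, b] × [y₀, ∞)` with `y₀ > 0`, and by Cauchy's estimate so does
`g'`. Differentiating under the integral sign, `z ↦ ∫₀^∞ g (z + iu) du` has derivative
`∫₀^∞ g' (τ + iu) du` at `τ`, and since `d/du g (τ + iu) = i g' (τ + iu)` this integral equals
`i g τ`. Hence `W' τ = -i · i g τ + a₀ τ ^ j = F τ · τ ^ j`.
-/

open scoped MatrixGroups UpperHalfPlane Topology Manifold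
open MeasureTheory Filter Complex Set Asymptotics Metric

local notation "ℍₒ" => UpperHalfPlane.upperHalfPlaneSet

theorem UpperHalfPlane.differentiableOn_of_eq {f : ℍ → ℂ} (hf : MDiff f) {fc : ℂ → ℂ}
    (hfc : ∀ τ : ℍ, fc τ = f τ) : DifferentiableOn ℂ fc ℍₒ :=
  (UpperHalfPlane.mdifferentiable_iff.1 hf).congr fun z hz => by
    simpa [UpperHalfPlane.ofComplex_apply_of_im_pos hz] using hfc ⟨z, hz⟩

theorem UpperHalfPlane.isBigO_comap_im_of_eq {E : Type*} [NormedAddCommGroup E] {f : ℍ → E}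
    {fc : ℂ → E} (hfc : ∀ τ : ℍ, fc τ = f τ) {c : ℝ}
    (hO : f =O[UpperHalfPlane.atImInfty] fun τ => Real.exp (-c * τ.im)) :
    fc =O[comap Complex.im atTop] fun z => Real.exp (-c * z.im) := by
  have hpos : ∀ᶠ z : ℂ in comap Complex.im atTop, 0 < z.im := preimage_mem_comap (Ioi_mem_atTop 0)
  refine (hO.comp_tendsto UpperHalfPlane.tendsto_comap_im_ofComplex).congr' ?_ ?_
  · filter_upwards [hpos] with z hz
    simpa [UpperHalfPlane.ofComplex_apply_of_im_pos hz] using (hfc ⟨z, hz⟩).symm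
  · filter_upwards [hpos] with z hz
    simp [UpperHalfPlane.ofComplex_apply_of_im_pos hz]

theorem closedBall_subset_reProdIm {a b y r : ℝ} {z : ℂ} (hz : z ∈ Icc a b ×ℂ Ici y) :
    closedBall z r ⊆ Icc (a - r) (b + r) ×ℂ Ici (y - r) := by
  intro ζ hζ
  rw [mem_closedBall, dist_eq] at hζ
  have hre := (abs_le.1 ((abs_re_le_norm (ζ - z)).trans hζ))
  have him := (abs_le.1 ((abs_im_le_norm (ζ - z)).trans hζ))
  rw [mem_reProdIm] at hz ⊢
  simp only [sub_re, sub_im, mem_Icc, mem_Ici] at hz hre him ⊢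
  refine ⟨⟨?_, ?_⟩, ?_⟩ <;> linarith

theorem isBigO_pow_exp_im (j : ℕ) {δ : ℝ} (hδ : 0 < δ) (a b : ℝ) {y₀ : ℝ} (hy₀ : 0 ≤ y₀) :
    (fun z : ℂ => z ^ j) =O[𝓟 (Icc a b ×ℂ Ici y₀)] fun z => Real.exp (δ * z.im) := by
  set R := max |a| |b|
  refine isBigO_principal.2 ⟨j.factorial / δ ^ j * Real.exp (δ * R), fun z hz => ?_⟩
  rw [mem_reProdIm] at hz
  have him : 0 ≤ z.im := hy₀.trans hz.2
  have hnorm : ‖z‖ ≤ R + z.im := by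
    have := norm_le_abs_re_add_abs_im z
    rw [abs_of_nonneg him] at this
    linarith [abs_le_max_abs_abs hz.1.1 hz.1.2]
  have hexp := Real.pow_div_factorial_le_exp (δ * (R + z.im)) (by positivity) j
  rw [div_le_iff₀ (by positivity), mul_pow] at hexp
  rw [norm_pow, Real.norm_of_nonneg (Real.exp_pos _).le, mul_assoc, ← Real.exp_add, ← mul_add,
    div_mul_eq_mul_div, le_div_iff₀' (by positivity)]
  calc δ ^ j * ‖z‖ ^ j ≤ δ ^ j * (R + z.im) ^ j := by gcongr
    _ ≤ _ := by linarith

section HalfStrips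

variable {E : Type*} [NormedAddCommGroup E]

def HasExpDecayOnHalfStrips (g : ℂ → E) : Prop :=
  ∀ a b y₀ : ℝ, 0 < y₀ → ∃ c > 0, g =O[𝓟 (Icc a b ×ℂ Ici y₀)] fun z => Real.exp (-c * z.im)

theorem HasExpDecayOnHalfStrips.of_isBigO {g : ℂ → E} (hg : ContinuousOn g ℍₒ) {c : ℝ}
    (hc : 0 < c) (hO : g =O[comap im atTop] fun z => Real.exp (-c * z.im)) :
    HasExpDecayOnHalfStrips g := by
  intro a b y₀ hy₀
  refine ⟨c, hc, ?_⟩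
  obtain ⟨C, hC⟩ := hO.bound
  obtain ⟨A, -, hA⟩ := (atTop_basis.comap im).eventually_iff.1 hC
  obtain ⟨M, hM⟩ := (isCompact_Icc.reProdIm isCompact_Icc).exists_bound_of_continuousOn
    (hg.mono fun z hz => show 0 < z.im from hy₀.trans_le ((mem_reProdIm.1 hz).2.1))
      (f := g) (s := Icc a b ×ℂ Icc y₀ A)
  refine isBigO_principal.2 ⟨max C (M * Real.exp (c * A)), fun z hz => ?_⟩
  rw [mem_reProdIm] at hz
  rcases le_total A z.im with hAz | hzA
  · exact (hA hAz).trans (mul_le_mul_of_nonneg_right (le_max_left _ _) (norm_nonneg _))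
  · have hzK := hM z (mem_reProdIm.2 ⟨hz.1, hz.2, hzA⟩)
    refine le_trans ?_ (mul_le_mul_of_nonneg_right (le_max_right _ _) (norm_nonneg _))
    rw [Real.norm_of_nonneg (Real.exp_pos _).le, mul_assoc, ← Real.exp_add]
    calc ‖g z‖ ≤ M := hzK
      _ ≤ M * Real.exp (c * A + -c * z.im) :=
        le_mul_of_one_le_right ((norm_nonneg _).trans hzK) (Real.one_le_exp (by nlinarith))

theorem HasExpDecayOnHalfStrips.mul_pow {g : ℂ → ℂ} (hg : HasExpDecayOnHalfStrips g) (j : ℕ) :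
    HasExpDecayOnHalfStrips fun z => g z * z ^ j := by
  intro a b y₀ hy₀
  obtain ⟨c, hc, hO⟩ := hg a b y₀ hy₀
  refine ⟨c / 2, half_pos hc,
    (hO.mul (isBigO_pow_exp_im j (half_pos hc) a b hy₀.le)).congr_right fun z => ?_⟩
  rw [← Real.exp_add]
  ring_nf

theorem HasExpDecayOnHalfStrips.exists_bound_vertical {g : ℂ → E} (hg : HasExpDecayOnHalfStrips g)
    {τ : ℂ} (hτ : 0 < τ.im) : ∃ C c : ℝ, 0 < c ∧
      ∀ x ∈ closedBall τ (τ.im / 2), ∀ u : ℝ, 0 ≤ u → ‖g (x + u * I)‖ ≤ C * Real.exp (-c * u) := by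
  set r := τ.im / 2
  obtain ⟨c, hc, hO⟩ := hg (τ.re - r) (τ.re + r) r (half_pos hτ)
  obtain ⟨C, hC, hCO⟩ := hO.exists_pos
  refine ⟨C, c, hc, fun x hx u hu => ?_⟩
  have hx' := mem_reProdIm.1 (closedBall_subset_reProdIm (a := τ.re) (b := τ.re) (y := τ.im)
    (by simp [mem_reProdIm]) hx)
  have hxim : r ≤ x.im := by simpa [r, sub_half] using hx'.2
  refine (isBigOWith_principal.1 hCO (x + u * I) ?_).trans ?_
  · refine mem_reProdIm.2 ⟨by simpa using hx'.1, ?_⟩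
    simp only [mem_Ici, add_im, mul_im, ofReal_re, I_im, ofReal_im, I_re]
    linarith
  · rw [Real.norm_of_nonneg (Real.exp_pos _).le]
    refine mul_le_mul_of_nonneg_left (Real.exp_le_exp.2 ?_) hC.le
    simp only [add_im, mul_im, ofReal_re, I_im, ofReal_im, I_re, mul_one, mul_zero, add_zero]
    nlinarith [mul_nonneg hc.le ((half_pos hτ).le.trans hxim)]

theorem ContinuousOn.aestronglyMeasurable_vertical {g : ℂ → E} (hg : ContinuousOn g ℍₒ) {x : ℂ}
    (hx : 0 ≤ x.im) : AEStronglyMeasurable (fun u : ℝ => g (x + u * I)) (volume.restrict (Ioi 0)) :=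
  (hg.comp (by fun_prop : Continuous fun u : ℝ => x + u * I).continuousOn fun u (hu : 0 < u) =>
    show 0 < (x + u * I).im by simp; linarith).aestronglyMeasurable measurableSet_Ioi

theorem HasExpDecayOnHalfStrips.integrableOn_vertical {g : ℂ → E} (hg : HasExpDecayOnHalfStrips g)
    (hc : ContinuousOn g ℍₒ) {τ : ℂ} (hτ : 0 < τ.im) :
    IntegrableOn (fun u : ℝ => g (τ + u * I)) (Ioi 0) := by
  obtain ⟨C, c, hc₀, hb⟩ := hg.exists_bound_vertical hτ
  refine ((exp_neg_integrableOn_Ioi 0 hc₀).const_mul C).mono'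
    (hc.aestronglyMeasurable_vertical hτ.le) ?_
  filter_upwards [ae_restrict_mem measurableSet_Ioi] with u hu
  exact hb τ (mem_closedBall_self (by positivity)) u (le_of_lt hu)

theorem HasExpDecayOnHalfStrips.tendsto_vertical {g : ℂ → E} (hg : HasExpDecayOnHalfStrips g)
    {τ : ℂ} (hτ : 0 < τ.im) : Tendsto (fun u : ℝ => g (τ + u * I)) atTop (𝓝 0) := by
  obtain ⟨C, c, hc₀, hb⟩ := hg.exists_bound_vertical hτ
  have hexp : Tendsto (fun u : ℝ => C * Real.exp (-c * u)) atTop (𝓝 0) := by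
    simpa using (Real.tendsto_exp_atBot.comp
      (tendsto_id.const_mul_atTop_of_neg (neg_neg_of_pos hc₀))).const_mul C
  refine squeeze_zero_norm' ?_ hexp
  filter_upwards [eventually_ge_atTop 0] with u hu
  exact hb τ (mem_closedBall_self (by positivity)) u hu

variable [NormedSpace ℂ E]

theorem HasExpDecayOnHalfStrips.deriv {g : ℂ → E} (hd : DifferentiableOn ℂ g ℍₒ)
    (hg : HasExpDecayOnHalfStrips g) : HasExpDecayOnHalfStrips (deriv g) := by
  intro a b y₀ hy₀
  set r := y₀ / 2
  have hr : 0 < r := half_pos hy₀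
  obtain ⟨c, hc, hO⟩ := hg (a - r) (b + r) r hr
  obtain ⟨C, hC, hCO⟩ := hO.exists_pos
  refine ⟨c, hc, isBigO_principal.2 ⟨C * Real.exp (c * r) / r, fun z hz => ?_⟩⟩
  have hball : closedBall z r ⊆ Icc (a - r) (b + r) ×ℂ Ici r := by
    simpa [r, sub_half] using closedBall_subset_reProdIm (r := r) hz
  have hdc : DiffContOnCl ℂ g (ball z r) := by
    refine (hd.mono ?_).diffContOnCl
    rw [closure_ball z hr.ne']
    exact fun ζ hζ => hr.trans_le (mem_reProdIm.1 (hball hζ)).2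
  refine (norm_deriv_le_of_forall_mem_sphere_norm_le
    (C := C * Real.exp (c * r) * Real.exp (-c * z.im)) hr hdc fun ζ hζ => ?_).trans_eq ?_
  · refine (isBigOWith_principal.1 hCO ζ (hball (sphere_subset_closedBall hζ))).trans ?_
    have hζim : z.im - r ≤ ζ.im := by
      have := abs_le.1 ((abs_im_le_norm (ζ - z)).trans (mem_sphere_iff_norm.1 hζ).le)
      rw [sub_im] at this
      linarith
    rw [Real.norm_of_nonneg (Real.exp_pos _).le, mul_assoc, ← Real.exp_add]
    gcongr
    nlinarith
  · rw [Real.norm_of_nonneg (Real.exp_pos _).le]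
    ring

variable [CompleteSpace E]

theorem HasExpDecayOnHalfStrips.integral_deriv_vertical {g : ℂ → E} (hd : DifferentiableOn ℂ g ℍₒ)
    (hg : HasExpDecayOnHalfStrips g) {τ : ℂ} (hτ : 0 < τ.im) :
    ∫ u in Ioi (0 : ℝ), _root_.deriv g (τ + u * I) = I • g τ := by
  have hray : ∀ u : ℝ, 0 ≤ u → 0 < (τ + u * I).im := fun u hu => by simp; linarith
  have hderiv : ∀ u ∈ Ioi (0 : ℝ),
      HasDerivAt (fun u : ℝ => g (τ + u * I)) (I • _root_.deriv g (τ + u * I)) u := fun u hu => by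
    have hpath : HasDerivAt (fun u : ℝ => τ + u * I) I u := by
      simpa using ((hasDerivAt_id (u : ℂ)).comp_ofReal.mul_const I).const_add τ
    exact ((hd.differentiableAt (UpperHalfPlane.isOpen_upperHalfPlaneSet.mem_nhds
      (hray u (le_of_lt hu)))).hasDerivAt).scomp u hpath
  have hint : IntegrableOn (fun u : ℝ => I • _root_.deriv g (τ + u * I)) (Ioi 0) :=
    ((hg.deriv hd).integrableOn_vertical
      (hd.deriv UpperHalfPlane.isOpen_upperHalfPlaneSet).continuousOn hτ).smul I
  have hcont : ContinuousWithinAt (fun u : ℝ => g (τ + u * I)) (Ici 0) 0 :=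
    (ContinuousAt.comp (f := fun u : ℝ => τ + u * I) (x := 0)
      (hd.continuousOn.continuousAt (UpperHalfPlane.isOpen_upperHalfPlaneSet.mem_nhds
        (hray 0 le_rfl))) (by fun_prop)).continuousWithinAt
  have hftc := integral_Ioi_of_hasDerivAt_of_tendsto hcont hderiv hint (hg.tendsto_vertical hτ)
  rw [integral_smul, zero_sub, ofReal_zero, zero_mul, add_zero] at hftc
  calc ∫ u in Ioi (0 : ℝ), _root_.deriv g (τ + u * I)
      = -I • I • ∫ u in Ioi (0 : ℝ), _root_.deriv g (τ + u * I) := by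
        rw [smul_smul, neg_mul, I_mul_I, neg_neg, one_smul]
    _ = I • g τ := by rw [hftc, smul_neg, neg_smul, neg_neg]

theorem HasExpDecayOnHalfStrips.hasDerivAt_integral_vertical {g : ℂ → E}
    (hd : DifferentiableOn ℂ g ℍₒ) (hg : HasExpDecayOnHalfStrips g) {τ : ℂ} (hτ : 0 < τ.im) :
    HasDerivAt (fun z => ∫ u in Ioi (0 : ℝ), g (z + u * I)) (I • g τ) τ := by
  have hopen := UpperHalfPlane.isOpen_upperHalfPlaneSet
  obtain ⟨C, c, hc, hb⟩ := (hg.deriv hd).exists_bound_vertical hτ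
  have hball : ∀ x ∈ ball τ (τ.im / 2), 0 < x.im := fun x hx => by
    have := abs_le.1 ((abs_im_le_norm (x - τ)).trans (mem_ball_iff_norm.1 hx).le)
    rw [sub_im] at this
    linarith
  have hmeas : ∀ᶠ x in 𝓝 τ, AEStronglyMeasurable (fun u : ℝ => g (x + u * I))
      (volume.restrict (Ioi 0)) := by
    filter_upwards [hopen.mem_nhds hτ] with x hx
    exact hd.continuousOn.aestronglyMeasurable_vertical (le_of_lt hx)
  have hdiff : ∀ᵐ u : ℝ ∂(volume.restrict (Ioi (0 : ℝ))), ∀ x ∈ ball τ (τ.im / 2),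
      HasDerivAt (fun x => g (x + u * I)) (_root_.deriv g (x + u * I)) x := by
    filter_upwards [ae_restrict_mem measurableSet_Ioi] with u hu x hx
    have hxu : 0 < (x + u * I).im := by simp; linarith [hball x hx, mem_Ioi.1 hu]
    exact ((hd.differentiableAt (hopen.mem_nhds hxu)).hasDerivAt).comp_add_const x (u * I)
  have hbound : ∀ᵐ u : ℝ ∂(volume.restrict (Ioi (0 : ℝ))), ∀ x ∈ ball τ (τ.im / 2),
      ‖_root_.deriv g (x + u * I)‖ ≤ C * Real.exp (-c * u) := by
    filter_upwards [ae_restrict_mem measurableSet_Ioi] with u hu x hx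
    exact hb x (ball_subset_closedBall hx) u (le_of_lt hu)
  have key := (hasDerivAt_integral_of_dominated_loc_of_deriv_le
    (F' := fun x u => _root_.deriv g (x + u * I)) (ball_mem_nhds τ (half_pos hτ))
    hmeas (hg.integrableOn_vertical hd.continuousOn hτ)
    ((hd.deriv hopen).continuousOn.aestronglyMeasurable_vertical hτ.le) hbound
    ((exp_neg_integrableOn_Ioi 0 hc).const_mul C) hdiff).2
  rwa [hg.integral_deriv_vertical hd hτ] at key

end HalfStrips

theorem statement7_general (N : ℕ) (hN : 1 ≤ N) (k : ℤ)
    (F : ModularForm (CongruenceSubgroup.Gamma N) k)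
    (a0 : ℂ)
    (ha0 : Tendsto (fun τ : ℍ => F τ) UpperHalfPlane.atImInfty (nhds a0))
    (j : ℕ)
    (Fc : ℂ → ℂ) (hFc : ∀ τ : ℍ, Fc (τ : ℂ) = F τ)
    (W : ℂ → ℂ)
    (hW : ∀ z : ℂ, W z =
      (-Complex.I) * (∫ u in Set.Ioi (0 : ℝ),
          (Fc (z + u * Complex.I) - a0) * (z + u * Complex.I) ^ j) +
        a0 * z ^ (j + 1) / (j + 1)) :
    ∀ τ : ℍ,
      MeasureTheory.IntegrableOn
        (fun u : ℝ => (Fc ((τ : ℂ) + u * Complex.I) - a0) * ((τ : ℂ) + u * Complex.I) ^ j)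
        (Set.Ioi 0) ∧
      HasDerivAt W (F τ * (τ : ℂ) ^ j) (τ : ℂ) := by
  have : NeZero N := ⟨by omega⟩
  obtain ⟨c, hc, hO⟩ := ModularFormClass.exp_decay_sub_atImInfty' F
  rw [UpperHalfPlane.valueAtInfty, ha0.limUnder_eq] at hO
  have hFc_sub : ∀ τ : ℍ, Fc τ - a0 = F τ - a0 := fun τ => by rw [hFc]
  have hFc_diff : DifferentiableOn ℂ (fun z => Fc z - a0) ℍₒ :=
    (UpperHalfPlane.differentiableOn_of_eq (ModularFormClass.holo F) hFc).sub_const a0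
  have hdiff : DifferentiableOn ℂ (fun z => (Fc z - a0) * z ^ j) ℍₒ :=
    hFc_diff.mul (differentiable_pow j).differentiableOn
  have hdecay : HasExpDecayOnHalfStrips fun z => (Fc z - a0) * z ^ j :=
    (HasExpDecayOnHalfStrips.of_isBigO hFc_diff.continuousOn hc
      (UpperHalfPlane.isBigO_comap_im_of_eq hFc_sub hO)).mul_pow j
  intro τ
  refine ⟨hdecay.integrableOn_vertical hdiff.continuousOn τ.im_pos, ?_⟩
  rw [show W = _ from funext hW]
  refine (((hdecay.hasDerivAt_integral_vertical hdiff τ.im_pos).const_mul (-I)).add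
    (((hasDerivAt_pow (j + 1) (τ : ℂ)).const_mul a0).div_const ((j : ℂ) + 1))).congr_deriv ?_
  rw [smul_eq_mul, hFc, Nat.add_sub_cancel, ← mul_assoc, neg_mul, I_mul_I, neg_neg, one_mul,
    Nat.cast_add_one, mul_div_assoc, mul_div_cancel_left₀ _ (Nat.cast_add_one_ne_zero j)]
  ring

/-- Let `N ≥ 1`, `k ≥ 2` and let `F` be a modular form of weight `k` and
level `Γ(N)`, with constant Fourier coefficient `a₀` at infinity.  For `0 ≤ j ≤ k - 2`,
the Eichler integral
`W_j(F)(τ) = -i·∫₀^∞ (F(τ+iu) - a₀)·(τ+iu)^j du + a₀·τ^{j+1}/(j+1)`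
converges absolutely for every `τ ∈ ℍ`, and `W_j(F)` is holomorphic on `ℍ` with complex
derivative `(d/dτ) W_j(F)(τ) = F(τ)·τ^j`.  (Here `Fc` is any extension of `F` to `ℂ` and
`W` is the function defined by the above formula.) -/
theorem statement7 (N : ℕ) (hN : 1 ≤ N) (k : ℤ) (hk : 2 ≤ k)
    (F : ModularForm (CongruenceSubgroup.Gamma N) k)
    (a0 : ℂ)
    (ha0 : Tendsto (fun τ : ℍ => F τ) UpperHalfPlane.atImInfty (nhds a0))
    (j : ℕ) (hj : (j : ℤ) ≤ k - 2)
    (Fc : ℂ → ℂ) (hFc : ∀ τ : ℍ, Fc (τ : ℂ) = F τ)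
    (W : ℂ → ℂ)
    (hW : ∀ z : ℂ, W z =
      (-Complex.I) * (∫ u in Set.Ioi (0 : ℝ),
          (Fc (z + u * Complex.I) - a0) * (z + u * Complex.I) ^ j) +
        a0 * z ^ (j + 1) / (j + 1)) :
    ∀ τ : ℍ,
      MeasureTheory.IntegrableOn
        (fun u : ℝ => (Fc ((τ : ℂ) + u * Complex.I) - a0) * ((τ : ℂ) + u * Complex.I) ^ j)
        (Set.Ioi 0) ∧
      HasDerivAt W (F τ * (τ : ℂ) ^ j) (τ : ℂ) :=
  statement7_general N hN k F a0 ha0 j Fc hFc W hW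
end

section
/- Let ℓ be a prime dividing N and let k ≥ 3. For every f : (ℤ/Nℤ)² → ℂ and every z ∈ ℍ one has (1/ℓ)·Σ_{i=0}^{ℓ−1} E_{k,f}((z+Ni)/ℓ) = E_{k,g}(z), where g : (ℤ/Nℤ)² → ℂ is defined by g(c,d) := f(ℓc, d) + ℓ^{k−1}·(Σ_{x ∈ ℤ/Nℤ, ℓx = d} f(c,x) if c ∉ ℓ·(ℤ/Nℤ), and 0 if c ∈ ℓ·(ℤ/Nℤ)). -/
noncomputable section

open scoped MatrixGroups UpperHalfPlane Classical

/-- The level-`N` Eisenstein series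
`E_{k,f}(z) = Σ_{(c,d) ∈ ℤ²∖{(0,0)}} f(c mod N, d mod N)·(cz+d)^{-k}`. -/
def Ek (N : ℕ) (k : ℕ) (f : ZMod N × ZMod N → ℂ) (z : ℂ) : ℂ :=
  ∑' p : ℤ × ℤ,
    if p = (0, 0) then 0
    else f ((p.1 : ZMod N), (p.2 : ZMod N)) * ((p.1 : ℂ) * z + (p.2 : ℂ)) ^ (-(k : ℤ))

lemma summS (w : ℍ) (k : ℤ) (hk : 3 ≤ k) :
    Summable fun p : ℤ × ℤ => ‖((p.1 : ℂ) * (w:ℂ) + (p.2:ℂ)) ^ (-k)‖ := by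
  apply ((finTwoArrowEquiv ℤ).summable_iff
    (f := fun p : ℤ × ℤ => ‖((p.1 : ℂ) * (w:ℂ) + (p.2:ℂ)) ^ (-k)‖)).mp
  have h := (EisensteinSeries.summable_norm_eisSummand hk w)
  have : ((fun p : ℤ × ℤ => ‖((p.1 : ℂ) * (w:ℂ) + (p.2:ℂ)) ^ (-k)‖) ∘ (finTwoArrowEquiv ℤ))
      = fun x : Fin 2 → ℤ => ‖EisensteinSeries.eisSummand k x w‖ := by
    funext x; simp [EisensteinSeries.eisSummand, finTwoArrowEquiv, UpperHalfPlane.coe]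
  rw [this]; exact h

lemma auxSummable (k : ℤ) (hk : 3 ≤ k) (w : ℍ) {F : ℤ × ℤ → ℂ} (B : ℝ)
    (hF : ∀ p : ℤ × ℤ, ‖F p‖ ≤ B * ‖((p.1 : ℂ) * (w:ℂ) + (p.2:ℂ)) ^ (-k)‖) :
    Summable F :=
  Summable.of_norm_bounded ((summS w k hk).mul_left B) hF

lemma auxDvdIff (N ℓ : ℕ) [NeZero N] (hdvd : ℓ ∣ N) (a : ℤ) :
    (∃ y : ZMod N, (a : ZMod N) = (ℓ : ZMod N) * y) ↔ (ℓ : ℤ) ∣ a := by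
  constructor
  · rintro ⟨y, hy⟩
    have h0 : ((a - ℓ * (y.val : ℤ) : ℤ) : ZMod N) = 0 := by
      push_cast
      rw [hy, ZMod.natCast_val, ZMod.cast_id]
      ring
    have hN : (N : ℤ) ∣ a - ℓ * (y.val : ℤ) := (ZMod.intCast_zmod_eq_zero_iff_dvd _ N).mp h0
    have hℓN : (ℓ : ℤ) ∣ (N : ℤ) := Int.natCast_dvd_natCast.mpr hdvd
    have h2 : (ℓ : ℤ) ∣ a - ℓ * (y.val : ℤ) := hℓN.trans hN
    have h3 := dvd_add h2 (dvd_mul_right (ℓ:ℤ) (y.val:ℤ))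
    simpa using h3
  · rintro ⟨b, rfl⟩
    exact ⟨(b : ZMod N), by push_cast; ring⟩

lemma auxFilterEmpty (N ℓ : ℕ) [NeZero N] (hdvd : ℓ ∣ N) (b : ℤ) (hb : ¬ (ℓ : ℤ) ∣ b) :
    (Finset.univ.filter fun x : ZMod N => (ℓ : ZMod N) * x = (b : ZMod N)) = ∅ := by
  ext x
  simp only [Finset.mem_filter, Finset.mem_univ, true_and, Finset.notMem_empty, iff_false]
  intro h
  apply hb
  have h0 : ((b - ℓ * (x.val : ℤ) : ℤ) : ZMod N) = 0 := by
    push_cast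
    rw [← h, ZMod.natCast_val, ZMod.cast_id]
    ring
  have hN : (N : ℤ) ∣ b - ℓ * (x.val : ℤ) := (ZMod.intCast_zmod_eq_zero_iff_dvd _ N).mp h0
  have hℓN : (ℓ : ℤ) ∣ (N : ℤ) := Int.natCast_dvd_natCast.mpr hdvd
  have h2 : (ℓ : ℤ) ∣ b - ℓ * (x.val : ℤ) := hℓN.trans hN
  have h3 := dvd_add h2 (dvd_mul_right (ℓ:ℤ) (x.val:ℤ))
  simpa using h3

lemma auxConst (N ℓ m : ℕ) [NeZero N] (hm : N = ℓ * m) (f : ZMod N × ZMod N → ℂ)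
    (a b' : ℤ) :
    ∑ i ∈ Finset.range ℓ,
        f ((((ℓ:ℤ) * a : ℤ) : ZMod N), ((b' - ((ℓ:ℤ) * a) * m * i : ℤ) : ZMod N))
      = (ℓ : ℂ) * f ((((ℓ:ℤ) * a : ℤ) : ZMod N), (b' : ZMod N)) := by
  have h : ∀ i ∈ Finset.range ℓ,
      f ((((ℓ:ℤ) * a : ℤ) : ZMod N), ((b' - ((ℓ:ℤ) * a) * m * i : ℤ) : ZMod N))
        = f ((((ℓ:ℤ) * a : ℤ) : ZMod N), (b' : ZMod N)) := by
    intro i _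
    have h : ((b' - ((ℓ:ℤ) * a) * m * i : ℤ) : ZMod N) = ((b' : ℤ) : ZMod N) := by
      rw [ZMod.intCast_eq_intCast_iff]
      refine Int.modEq_iff_dvd.mpr ⟨a * i, ?_⟩
      push_cast [hm]; ring
    rw [h]
  rw [Finset.sum_congr rfl h, Finset.sum_const, Finset.card_range, nsmul_eq_mul]

lemma auxCount (N ℓ m : ℕ) [NeZero N] (hℓ : Nat.Prime ℓ) (hm : N = ℓ * m)
    (f : ZMod N × ZMod N → ℂ) (c b' : ℤ) (hc : ¬ (ℓ : ℤ) ∣ c) :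
    ∑ i ∈ Finset.range ℓ, f ((c : ZMod N), ((b' - c * m * i : ℤ) : ZMod N))
      = ∑ x ∈ Finset.univ.filter
          (fun x : ZMod N => (ℓ : ZMod N) * x = (ℓ : ZMod N) * ((b' : ℤ) : ZMod N)),
        f ((c : ZMod N), x) := by
  haveI : Fact (Nat.Prime ℓ) := ⟨hℓ⟩
  have hℓ0 : ℓ ≠ 0 := hℓ.ne_zero
  have hm0 : m ≠ 0 := by rintro rfl; exact (NeZero.ne N) (by simpa using hm)
  have hc0 : (c : ZMod ℓ) ≠ 0 := by
    simpa [ZMod.intCast_zmod_eq_zero_iff_dvd] using hc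
  refine Finset.sum_bij (fun i _ => ((b' - c * m * i : ℤ) : ZMod N)) ?_ ?_ ?_ ?_
  · intro i _
    simp only [Finset.mem_filter, Finset.mem_univ, true_and]
    have h1 : (ℓ : ZMod N) * ((b' - c * m * i : ℤ) : ZMod N)
        = ((ℓ * b' - (N:ℤ) * (c * i) : ℤ) : ZMod N) := by push_cast [hm]; ring
    have h2 : ((ℓ * b' - (N:ℤ) * (c * i) : ℤ) : ZMod N) = ((ℓ * b' : ℤ) : ZMod N) := by
      rw [ZMod.intCast_eq_intCast_iff]
      exact Int.modEq_iff_dvd.mpr ⟨c * i, by ring⟩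
    rw [h1, h2]; push_cast; ring
  · intro i hi j hj hij
    have hNdvd : (N : ℤ) ∣ (b' - c * m * j) - (b' - c * m * i) :=
      ((ZMod.intCast_eq_intCast_iff _ _ _).mp hij).dvd
    have hNZ : (N : ℤ) = (ℓ : ℤ) * m := by exact_mod_cast hm
    have h1 : ((ℓ : ℤ) * m) ∣ (c * ((i:ℤ) - j)) * m := by
      have he : (b' - c * m * (j:ℤ)) - (b' - c * m * i) = (c * ((i:ℤ) - j)) * m := by ring
      rw [he, hNZ] at hNdvd
      exact hNdvd
    have h2 : (ℓ : ℤ) ∣ c * ((i:ℤ) - j) :=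
      (mul_dvd_mul_iff_right (by exact_mod_cast hm0 : (m : ℤ) ≠ 0)).mp h1
    have h3 : (ℓ : ℤ) ∣ ((i:ℤ) - j) :=
      (Int.Prime.dvd_mul' (by exact_mod_cast hℓ) h2).resolve_left hc
    have h4 : ((i : ℤ) : ZMod ℓ) = ((j : ℤ) : ZMod ℓ) := by
      rw [ZMod.intCast_eq_intCast_iff]
      refine Int.modEq_iff_dvd.mpr ?_
      have := dvd_neg.mpr h3; rwa [neg_sub] at this
    have h5 : ((i : ℕ) : ZMod ℓ) = ((j : ℕ) : ZMod ℓ) := by exact_mod_cast h4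
    have hilt := Finset.mem_range.mp hi; have hjlt := Finset.mem_range.mp hj
    rwa [ZMod.natCast_eq_natCast_iff, Nat.ModEq,
      Nat.mod_eq_of_lt hilt, Nat.mod_eq_of_lt hjlt] at h5
  · intro x hx
    simp only [Finset.mem_filter, Finset.mem_univ, true_and] at hx
    set u : ZMod N := ((b' : ℤ) : ZMod N) - x with hu
    have hu0 : (ℓ : ZMod N) * u = 0 := by rw [hu, mul_sub, hx]; ring
    have hval : ((u.val : ℕ) : ZMod N) = u := ZMod.natCast_rightInverse u
    have hNd : N ∣ ℓ * u.val := by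
      have h0 : ((ℓ * u.val : ℕ) : ZMod N) = 0 := by push_cast; rw [hval]; exact hu0
      exact (ZMod.natCast_eq_zero_iff _ N).mp h0
    obtain ⟨s, hs0⟩ := hNd
    have hstep : ℓ * u.val = ℓ * (m * s) := by rw [hs0, hm]; ring
    have hmd : u.val = m * s := Nat.eq_of_mul_eq_mul_left (Nat.pos_of_ne_zero hℓ0) hstep
    set t := s with htdef
    set j : ZMod ℓ := (t : ZMod ℓ) * (c : ZMod ℓ)⁻¹ with hj
    refine ⟨j.val, Finset.mem_range.mpr (ZMod.val_lt j), ?_⟩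
    have hcj : (c : ZMod ℓ) * j = (t : ZMod ℓ) := by
      rw [hj]; field_simp
    have h1 : ((c * (j.val : ℤ) - t : ℤ) : ZMod ℓ) = 0 := by
      push_cast
      rw [ZMod.natCast_val, ZMod.cast_id, ← hcj]
      ring
    obtain ⟨s', hs⟩ := (ZMod.intCast_zmod_eq_zero_iff_dvd _ ℓ).mp h1
    show ((b' - c * m * (j.val : ℤ) : ℤ) : ZMod N) = x
    have key : ((b' - c * m * (j.val : ℤ) : ℤ) : ZMod N)
        = ((b' - (m * t : ℕ) : ℤ) : ZMod N) := by
      rw [ZMod.intCast_eq_intCast_iff]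
      refine Int.modEq_iff_dvd.mpr ⟨s', ?_⟩
      push_cast [hm]
      linear_combination (m:ℤ) * hs
    rw [key]
    have h2 : ((m * t : ℕ) : ZMod N) = ((b' : ℤ) : ZMod N) - x := by
      rw [← hmd, hval]
    push_cast at h2 ⊢
    linear_combination -h2
  · intro i _; rfl

/-- shear equivalence `(c,b) ↦ (c, b - c·m·i)`. -/
def shearEquiv (m i : ℤ) : ℤ × ℤ ≃ ℤ × ℤ where
  toFun p := (p.1, p.2 - p.1 * m * i)
  invFun p := (p.1, p.2 + p.1 * m * i)
  left_inv p := by cases p; simp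
  right_inv p := by cases p; simp

def auxG (N ℓ m k : ℕ) (f : ZMod N × ZMod N → ℂ) (z : ℂ) (i : ℕ) (p : ℤ × ℤ) : ℂ :=
  if p = (0, 0) then 0
  else f ((p.1 : ZMod N), ((p.2 - p.1 * m * i : ℤ) : ZMod N)) *
    ((p.1 : ℂ) * z + (ℓ : ℂ) * (p.2 : ℂ)) ^ (-(k : ℤ))

def auxW1 (N ℓ k : ℕ) (f : ZMod N × ZMod N → ℂ) (z : ℂ) (p : ℤ × ℤ) : ℂ :=
  if p = (0, 0) then 0
  else (if (ℓ : ℤ) ∣ p.1 then (ℓ : ℂ) * f ((p.1 : ZMod N), (p.2 : ZMod N)) else 0) *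
    ((p.1 : ℂ) * z + (ℓ : ℂ) * (p.2 : ℂ)) ^ (-(k : ℤ))

def auxW2 (N ℓ k : ℕ) [NeZero N] (f : ZMod N × ZMod N → ℂ) (z : ℂ) (p : ℤ × ℤ) : ℂ :=
  if p = (0, 0) then 0
  else (if (ℓ : ℤ) ∣ p.1 then 0
      else ∑ x ∈ Finset.univ.filter
          (fun x : ZMod N => (ℓ : ZMod N) * x = (ℓ : ZMod N) * ((p.2 : ℤ) : ZMod N)),
        f ((p.1 : ZMod N), x)) *
    ((p.1 : ℂ) * z + (ℓ : ℂ) * (p.2 : ℂ)) ^ (-(k : ℤ))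

def auxH1 (N ℓ k : ℕ) (f : ZMod N × ZMod N → ℂ) (z : ℂ) (p : ℤ × ℤ) : ℂ :=
  if p = (0, 0) then 0
  else f ((ℓ : ZMod N) * (p.1 : ZMod N), (p.2 : ZMod N)) *
    ((p.1 : ℂ) * z + (p.2 : ℂ)) ^ (-(k : ℤ))

def auxH2 (N ℓ k : ℕ) [NeZero N] (f : ZMod N × ZMod N → ℂ) (z : ℂ) (p : ℤ × ℤ) : ℂ :=
  if p = (0, 0) then 0
  else ((ℓ : ℂ) ^ (k - 1) *
      (if ∃ y : ZMod N, (p.1 : ZMod N) = (ℓ : ZMod N) * y then 0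
       else ∑ x ∈ Finset.univ.filter
           (fun x : ZMod N => (ℓ : ZMod N) * x = (p.2 : ZMod N)), f ((p.1 : ZMod N), x))) *
    ((p.1 : ℂ) * z + (p.2 : ℂ)) ^ (-(k : ℤ))

/-- Let `ℓ` be a prime dividing `N` and `k ≥ 3`.  For every
`f : (ℤ/Nℤ)² → ℂ` and `z ∈ ℍ`,
`(1/ℓ)·Σ_{i=0}^{ℓ-1} E_{k,f}((z+Ni)/ℓ) = E_{k,g}(z)` where
`g(c,d) = f(ℓc,d) + ℓ^{k-1}·(Σ_{ℓx=d} f(c,x)` if `c ∉ ℓ·(ℤ/Nℤ)`, and `0` otherwise `)`. -/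
theorem statement10 (N : ℕ) [NeZero N] (ℓ : ℕ) (hℓ : Nat.Prime ℓ) (hdvd : ℓ ∣ N)
    (k : ℕ) (hk : 3 ≤ k) (f : ZMod N × ZMod N → ℂ) (z : ℍ) :
    (1 / (ℓ : ℂ)) * ∑ i ∈ Finset.range ℓ, Ek N k f (((z : ℂ) + (N : ℂ) * (i : ℂ)) / (ℓ : ℂ))
      = Ek N k (fun p : ZMod N × ZMod N =>
          f ((ℓ : ZMod N) * p.1, p.2) +
            (ℓ : ℂ) ^ (k - 1) *
              (if ∃ y : ZMod N, p.1 = (ℓ : ZMod N) * y then 0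
               else ∑ x ∈ Finset.univ.filter fun x : ZMod N => (ℓ : ZMod N) * x = p.2,
                 f (p.1, x))) (z : ℂ) := by
  classical
  obtain ⟨m, hm⟩ := id hdvd
  haveI : Fact (Nat.Prime ℓ) := ⟨hℓ⟩
  have hℓ0 : ℓ ≠ 0 := hℓ.ne_zero
  have hℓC : (ℓ : ℂ) ≠ 0 := Nat.cast_ne_zero.mpr hℓ0
  have hℓZ : (ℓ : ℤ) ≠ 0 := Int.natCast_ne_zero.mpr hℓ0
  have hK : (3 : ℤ) ≤ (k : ℤ) := by exact_mod_cast hk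
  have hNC : (N : ℂ) = (ℓ : ℂ) * m := by exact_mod_cast hm
  have him : 0 < ((z : ℂ) / (ℓ : ℂ)).im := by
    rw [Complex.div_natCast_im]
    exact div_pos z.2 (by exact_mod_cast hℓ.pos)
  set w : ℍ := ⟨(z : ℂ) / (ℓ : ℂ), him⟩ with hwdef
  have hwc : (w : ℂ) = (z : ℂ) / (ℓ : ℂ) := rfl
  set C : ℝ := ∑ q : ZMod N × ZMod N, ‖f q‖ with hCdef
  have hCb : ∀ q, ‖f q‖ ≤ C :=
    fun q => Finset.single_le_sum (f := fun q => ‖f q‖)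
      (fun i _ => norm_nonneg _) (Finset.mem_univ q)
  have hC0 : (0:ℝ) ≤ C := Finset.sum_nonneg fun i _ => norm_nonneg _
  have hFb : ∀ (c : ZMod N) (s : Finset (ZMod N)), ‖∑ x ∈ s, f (c, x)‖ ≤ N * C := by
    intro c s
    calc ‖∑ x ∈ s, f (c, x)‖ ≤ ∑ x ∈ s, ‖f (c, x)‖ := norm_sum_le _ _
      _ ≤ ∑ _x ∈ s, C := Finset.sum_le_sum (fun x _ => hCb _)
      _ = s.card * C := by rw [Finset.sum_const, nsmul_eq_mul]
      _ ≤ N * C := by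
          have h1 : s.card ≤ N := by simpa [ZMod.card] using Finset.card_le_univ s
          exact mul_le_mul_of_nonneg_right (by exact_mod_cast h1) hC0
  have hnorm : ∀ p : ℤ × ℤ, ‖((p.1 : ℂ) * z + (ℓ : ℂ) * p.2) ^ (-(k : ℤ))‖
      ≤ ‖((p.1 : ℂ) * (w : ℂ) + (p.2 : ℂ)) ^ (-(k : ℤ))‖ := by
    intro p
    have harg : (p.1 : ℂ) * z + (ℓ : ℂ) * p.2 = (ℓ : ℂ) * ((p.1 : ℂ) * (w : ℂ) + p.2) := by
      rw [hwc]; field_simp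
    rw [harg, mul_zpow, norm_mul]
    have h1 : ‖(ℓ : ℂ) ^ (-(k : ℤ))‖ ≤ 1 := by
      rw [norm_zpow, zpow_neg]
      apply inv_le_one_of_one_le₀
      apply one_le_zpow₀ _ (by positivity)
      simp only [Complex.norm_natCast]
      exact_mod_cast Nat.one_le_iff_ne_zero.mpr hℓ0
    calc ‖(ℓ:ℂ) ^ (-(k:ℤ))‖ * ‖((p.1:ℂ) * (w:ℂ) + (p.2:ℂ)) ^ (-(k:ℤ))‖
        ≤ 1 * ‖((p.1:ℂ) * (w:ℂ) + (p.2:ℂ)) ^ (-(k:ℤ))‖ :=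
          mul_le_mul_of_nonneg_right h1 (norm_nonneg _)
      _ = ‖((p.1:ℂ) * (w:ℂ) + (p.2:ℂ)) ^ (-(k:ℤ))‖ := one_mul _
  -- summability
  have hsumG : ∀ i : ℕ, Summable (auxG N ℓ m k f z i) := by
    intro i
    apply auxSummable (k:ℤ) hK w C
    intro p
    rw [auxG]
    split_ifs with h
    · rw [norm_zero]; exact mul_nonneg hC0 (norm_nonneg _)
    · rw [norm_mul]
      exact mul_le_mul (hCb _) (hnorm p) (norm_nonneg _) hC0
  have hsumW1 : Summable (auxW1 N ℓ k f z) := by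
    apply auxSummable (k:ℤ) hK w ((ℓ:ℝ) * C)
    intro p
    rw [auxW1]
    split_ifs with h h2
    · rw [norm_zero]
      exact mul_nonneg (mul_nonneg (Nat.cast_nonneg ℓ) hC0) (norm_nonneg _)
    · rw [norm_mul]
      refine mul_le_mul ?_ (hnorm p) (norm_nonneg _) (mul_nonneg (Nat.cast_nonneg ℓ) hC0)
      rw [norm_mul, Complex.norm_natCast]
      exact mul_le_mul_of_nonneg_left (hCb _) (Nat.cast_nonneg ℓ)
    · rw [zero_mul, norm_zero]
      exact mul_nonneg (mul_nonneg (Nat.cast_nonneg ℓ) hC0) (norm_nonneg _)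
  have hsumW2 : Summable (auxW2 N ℓ k f z) := by
    apply auxSummable (k:ℤ) hK w ((N:ℝ) * C)
    intro p
    rw [auxW2]
    split_ifs with h h2
    · rw [norm_zero]
      exact mul_nonneg (mul_nonneg (Nat.cast_nonneg N) hC0) (norm_nonneg _)
    · rw [zero_mul, norm_zero]
      exact mul_nonneg (mul_nonneg (Nat.cast_nonneg N) hC0) (norm_nonneg _)
    · rw [norm_mul]
      exact mul_le_mul (hFb _ _) (hnorm p) (norm_nonneg _)
        (mul_nonneg (Nat.cast_nonneg N) hC0)
  have hsumH1 : Summable (auxH1 N ℓ k f z) := by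
    apply auxSummable (k:ℤ) hK z C
    intro p
    rw [auxH1]
    split_ifs with h
    · rw [norm_zero]; exact mul_nonneg hC0 (norm_nonneg _)
    · rw [norm_mul]
      exact mul_le_mul (hCb _) le_rfl (norm_nonneg _) hC0
  have hsumH2 : Summable (auxH2 N ℓ k f z) := by
    apply auxSummable (k:ℤ) hK z ((ℓ:ℝ)^(k-1) * ((N:ℝ) * C))
    intro p
    have hnn : (0:ℝ) ≤ (ℓ:ℝ)^(k-1) * ((N:ℝ) * C) :=
      mul_nonneg (pow_nonneg (Nat.cast_nonneg ℓ) _) (mul_nonneg (Nat.cast_nonneg N) hC0)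
    rw [auxH2]
    split_ifs with h h2
    · rw [norm_zero]; exact mul_nonneg hnn (norm_nonneg _)
    · rw [mul_zero, zero_mul, norm_zero]; exact mul_nonneg hnn (norm_nonneg _)
    · rw [norm_mul, norm_mul]
      refine mul_le_mul ?_ le_rfl (norm_nonneg _) hnn
      rw [norm_pow, Complex.norm_natCast]
      exact mul_le_mul_of_nonneg_left (hFb _ _) (pow_nonneg (Nat.cast_nonneg ℓ) _)
  -- step A
  have stepA : ∀ i : ℕ, Ek N k f (((z : ℂ) + (N : ℂ) * (i : ℂ)) / (ℓ : ℂ))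
      = (ℓ : ℂ) ^ (k : ℤ) * ∑' p : ℤ × ℤ, auxG N ℓ m k f z i p := by
    intro i
    rw [Ek, ← (shearEquiv (m : ℤ) (i : ℤ)).tsum_eq, ← tsum_mul_left]
    apply tsum_congr
    rintro ⟨c, b⟩
    by_cases hp : ((c : ℤ), (b : ℤ)) = (0, 0)
    · obtain ⟨h1, h2⟩ := Prod.mk.injEq .. ▸ hp
      subst h1; subst h2
      simp [shearEquiv, auxG]
    · have hp2 : ((c : ℤ), b - c * m * i) ≠ (0, 0) := by
        intro hcon
        apply hp
        obtain ⟨h1, h2⟩ := Prod.mk.injEq .. ▸ hcon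
        subst h1
        simp only [zero_mul, sub_zero] at h2
        simp [h2]
      have hsh : (shearEquiv (m : ℤ) (i : ℤ)) (c, b) = (c, b - c * m * i) := rfl
      rw [hsh]
      simp only [auxG, if_neg hp, if_neg hp2]
      have harg : (c : ℂ) * (((z : ℂ) + (N : ℂ) * (i : ℂ)) / (ℓ : ℂ))
            + ((b - c * m * i : ℤ) : ℂ)
          = ((c : ℂ) * z + (ℓ : ℂ) * (b : ℂ)) / (ℓ : ℂ) := by
        push_cast [hNC]
        field_simp
        ring
      rw [harg, div_zpow, zpow_neg (ℓ:ℂ) (k:ℤ), div_eq_mul_inv, inv_inv]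
      ring
  -- pointwise split of the i-sum
  have hW : ∀ p : ℤ × ℤ, ∑ i ∈ Finset.range ℓ, auxG N ℓ m k f z i p
      = auxW1 N ℓ k f z p + auxW2 N ℓ k f z p := by
    rintro ⟨c, b⟩
    by_cases hp : ((c : ℤ), (b : ℤ)) = (0, 0)
    · simp [auxG, auxW1, auxW2, hp]
    · simp only [auxG, auxW1, auxW2, if_neg hp]
      rw [← Finset.sum_mul]
      by_cases hd : (ℓ : ℤ) ∣ c
      · obtain ⟨a, rfl⟩ := hd
        rw [if_pos (dvd_mul_right (ℓ:ℤ) a), if_pos (dvd_mul_right (ℓ:ℤ) a)]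
        rw [auxConst N ℓ m hm f a b]
        ring
      · rw [if_neg hd, if_neg hd]
        rw [auxCount N ℓ m hℓ hm f c b hd]
        ring
  -- part 1
  have hinj1 : Function.Injective (fun q : ℤ × ℤ => ((ℓ : ℤ) * q.1, q.2)) := by
    rintro ⟨a1, b1⟩ ⟨a2, b2⟩ h
    obtain ⟨h1, h2⟩ := Prod.mk.injEq .. ▸ h
    exact Prod.ext (mul_left_cancel₀ hℓZ h1) h2
  have hsupp1 : Function.support (auxW1 N ℓ k f z)
      ⊆ Set.range (fun q : ℤ × ℤ => ((ℓ : ℤ) * q.1, q.2)) := by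
    intro p hp
    by_cases hd : (ℓ : ℤ) ∣ p.1
    · obtain ⟨a, ha⟩ := hd
      exact ⟨(a, p.2), by simp [← ha]⟩
    · exfalso
      apply hp
      rw [auxW1, if_neg hd]
      split_ifs <;> simp
  have hpt1 : ∀ q : ℤ × ℤ, (ℓ : ℂ) ^ (k - 1) * auxW1 N ℓ k f z ((ℓ : ℤ) * q.1, q.2)
      = auxH1 N ℓ k f z q := by
    rintro ⟨a, b⟩
    by_cases hq : ((a : ℤ), (b : ℤ)) = (0, 0)
    · obtain ⟨h1, h2⟩ := Prod.mk.injEq .. ▸ hq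
      subst h1; subst h2
      simp [auxW1, auxH1]
    · have hq2 : ((ℓ : ℤ) * a, b) ≠ (0, 0) := by
        intro hcon
        apply hq
        obtain ⟨h1, h2⟩ := Prod.mk.injEq .. ▸ hcon
        have : a = 0 := by
          rcases mul_eq_zero.mp h1 with h | h
          · exact absurd h hℓZ
          · exact h
        simp [this, h2]
      simp only [auxW1, auxH1, if_neg hq, if_neg hq2, if_pos (dvd_mul_right (ℓ:ℤ) a)]
      have hcast1 : (((ℓ : ℤ) * a : ℤ) : ZMod N) = (ℓ : ZMod N) * (a : ZMod N) := by
        push_cast; ring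
      have hcast2 : (((ℓ : ℤ) * a : ℤ) : ℂ) = (ℓ : ℂ) * (a : ℂ) := by push_cast; ring
      rw [hcast1, hcast2]
      have harg : (ℓ : ℂ) * (a : ℂ) * (z : ℂ) + (ℓ : ℂ) * (b : ℂ)
          = (ℓ : ℂ) * ((a : ℂ) * z + b) := by ring
      rw [harg, mul_zpow]
      have hℓk : (ℓ:ℂ)^(k-1) * (ℓ:ℂ) = (ℓ:ℂ)^k := by
        rw [← pow_succ]; congr 1; omega
      have hc1 : (ℓ : ℂ) ^ (k - 1) * ((ℓ : ℂ) * ((ℓ : ℂ) ^ (-(k:ℤ)))) = 1 := by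
        rw [zpow_neg, zpow_natCast, ← mul_assoc, hℓk]
        exact mul_inv_cancel₀ (pow_ne_zero _ hℓC)
      linear_combination (f ((ℓ : ZMod N) * (a : ZMod N), (b : ZMod N))
        * ((a : ℂ) * z + b) ^ (-(k:ℤ))) * hc1
  have hpart1 : (ℓ : ℂ) ^ (k - 1) * ∑' p : ℤ × ℤ, auxW1 N ℓ k f z p
      = ∑' p : ℤ × ℤ, auxH1 N ℓ k f z p := by
    rw [← hinj1.tsum_eq hsupp1 (f := auxW1 N ℓ k f z), ← tsum_mul_left]
    exact tsum_congr hpt1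
  -- part 2
  have hinj2 : Function.Injective (fun q : ℤ × ℤ => (q.1, (ℓ : ℤ) * q.2)) := by
    rintro ⟨a1, b1⟩ ⟨a2, b2⟩ h
    obtain ⟨h1, h2⟩ := Prod.mk.injEq .. ▸ h
    exact Prod.ext h1 (mul_left_cancel₀ hℓZ h2)
  have hsupp2 : Function.support (auxH2 N ℓ k f z)
      ⊆ Set.range (fun q : ℤ × ℤ => (q.1, (ℓ : ℤ) * q.2)) := by
    intro p hp
    by_cases hd : (ℓ : ℤ) ∣ p.2
    · obtain ⟨b, hb⟩ := hd
      exact ⟨(p.1, b), by simp [← hb]⟩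
    · exfalso
      apply hp
      rw [auxH2]
      split_ifs with h1 h2
      · rfl
      · simp
      · rw [auxFilterEmpty N ℓ hdvd p.2 hd]
        simp
  have hpt2 : ∀ q : ℤ × ℤ, (ℓ : ℂ) ^ (k - 1) * auxW2 N ℓ k f z q
      = auxH2 N ℓ k f z (q.1, (ℓ : ℤ) * q.2) := by
    rintro ⟨a, b⟩
    by_cases hq : ((a : ℤ), (b : ℤ)) = (0, 0)
    · obtain ⟨h1, h2⟩ := Prod.mk.injEq .. ▸ hq
      subst h1; subst h2
      simp [auxW2, auxH2]
    · have hq2 : ((a : ℤ), (ℓ : ℤ) * b) ≠ (0, 0) := by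
        intro hcon
        apply hq
        obtain ⟨h1, h2⟩ := Prod.mk.injEq .. ▸ hcon
        have : b = 0 := by
          rcases mul_eq_zero.mp h2 with h | h
          · exact absurd h hℓZ
          · exact h
        simp [this, h1]
      simp only [auxW2, auxH2, if_neg hq, if_neg hq2]
      have hcast1 : (((ℓ : ℤ) * b : ℤ) : ZMod N) = (ℓ : ZMod N) * ((b : ℤ) : ZMod N) := by
        push_cast; ring
      have hcast2 : (((ℓ : ℤ) * b : ℤ) : ℂ) = (ℓ : ℂ) * (b : ℂ) := by push_cast; ring
      rw [hcast1, hcast2]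
      by_cases hd : (ℓ : ℤ) ∣ a
      · rw [if_pos hd, if_pos ((auxDvdIff N ℓ hdvd a).mpr hd)]
        simp
      · rw [if_neg hd, if_neg (fun hex => hd ((auxDvdIff N ℓ hdvd a).mp hex))]
        ring
  have hpart2 : (ℓ : ℂ) ^ (k - 1) * ∑' p : ℤ × ℤ, auxW2 N ℓ k f z p
      = ∑' p : ℤ × ℤ, auxH2 N ℓ k f z p := by
    rw [← hinj2.tsum_eq hsupp2 (f := auxH2 N ℓ k f z), ← tsum_mul_left]
    exact tsum_congr hpt2
  -- constant
  have hc0' : (1 / (ℓ : ℂ)) * (ℓ : ℂ) ^ (k : ℤ) = (ℓ : ℂ) ^ (k - 1) := by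
    rw [zpow_natCast]
    have h : (ℓ : ℂ) ^ k = (ℓ : ℂ) ^ (k - 1) * (ℓ : ℂ) := by
      rw [← pow_succ]; congr 1; omega
    rw [h]
    field_simp
  -- final RHS identification
  have hH : ∀ p : ℤ × ℤ,
      auxH1 N ℓ k f z p + auxH2 N ℓ k f z p
        = (if p = (0, 0) then 0
          else (f ((ℓ : ZMod N) * (p.1 : ZMod N), (p.2 : ZMod N)) +
            (ℓ : ℂ) ^ (k - 1) *
              (if ∃ y : ZMod N, (p.1 : ZMod N) = (ℓ : ZMod N) * y then 0
               else ∑ x ∈ Finset.univ.filter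
                   (fun x : ZMod N => (ℓ : ZMod N) * x = (p.2 : ZMod N)),
                 f ((p.1 : ZMod N), x))) *
            ((p.1 : ℂ) * (z : ℂ) + (p.2 : ℂ)) ^ (-(k : ℤ))) := by
    intro p
    by_cases hp : p = (0, 0)
    · simp [auxH1, auxH2, hp]
    · simp only [auxH1, auxH2, if_neg hp]
      ring
  calc (1 / (ℓ : ℂ)) * ∑ i ∈ Finset.range ℓ, Ek N k f (((z : ℂ) + (N : ℂ) * (i : ℂ)) / (ℓ : ℂ))
      = (1 / (ℓ : ℂ)) * ∑ i ∈ Finset.range ℓ,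
          ((ℓ : ℂ) ^ (k : ℤ) * ∑' p : ℤ × ℤ, auxG N ℓ m k f z i p) := by
        rw [Finset.sum_congr rfl fun i _ => stepA i]
    _ = ((1 / (ℓ : ℂ)) * (ℓ : ℂ) ^ (k : ℤ)) *
          ∑ i ∈ Finset.range ℓ, ∑' p : ℤ × ℤ, auxG N ℓ m k f z i p := by
        rw [← Finset.mul_sum, ← mul_assoc]
    _ = (ℓ : ℂ) ^ (k - 1) * ∑' p : ℤ × ℤ, ∑ i ∈ Finset.range ℓ, auxG N ℓ m k f z i p := by
        rw [hc0', Summable.tsum_finsetSum fun i _ => hsumG i]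
    _ = (ℓ : ℂ) ^ (k - 1) * ∑' p : ℤ × ℤ, (auxW1 N ℓ k f z p + auxW2 N ℓ k f z p) := by
        rw [tsum_congr hW]
    _ = (ℓ : ℂ) ^ (k - 1) * (∑' p : ℤ × ℤ, auxW1 N ℓ k f z p)
          + (ℓ : ℂ) ^ (k - 1) * ∑' p : ℤ × ℤ, auxW2 N ℓ k f z p := by
        rw [Summable.tsum_add hsumW1 hsumW2, mul_add]
    _ = (∑' p : ℤ × ℤ, auxH1 N ℓ k f z p) + ∑' p : ℤ × ℤ, auxH2 N ℓ k f z p := by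
        rw [hpart1, hpart2]
    _ = ∑' p : ℤ × ℤ, (auxH1 N ℓ k f z p + auxH2 N ℓ k f z p) :=
        (Summable.tsum_add hsumH1 hsumH2).symm
    _ = Ek N k (fun p : ZMod N × ZMod N =>
          f ((ℓ : ZMod N) * p.1, p.2) +
            (ℓ : ℂ) ^ (k - 1) *
              (if ∃ y : ZMod N, p.1 = (ℓ : ZMod N) * y then 0
               else ∑ x ∈ Finset.univ.filter fun x : ZMod N => (ℓ : ZMod N) * x = p.2,
                 f (p.1, x))) (z : ℂ) := by
        rw [Ek]
        exact tsum_congr hH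
end
end

section
/- Let k ≥ 3, let M be a positive divisor of N, and let a ∈ M·(ℤ/Nℤ)². Then for every z ∈ ℍ one has M^{k−2}·Σ_{b ∈ (ℤ/Nℤ)², M·b = a} E_{k, \widehat{𝟙_b}}(z) = E_{k, \widehat{𝟙_a}}(z), where 𝟙_b denotes the indicator function of the single point b ∈ (ℤ/Nℤ)². -/
noncomputable section

open scoped MatrixGroups UpperHalfPlane Classical

/-- The additive character `x ↦ exp(2πi·x/N)` of `ℤ/Nℤ`. -/
def eChar (N : ℕ) [NeZero N] (x : ZMod N) : ℂ :=
  Complex.exp (2 * (Real.pi : ℂ) * Complex.I * (x.val : ℂ) / (N : ℂ))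

/-- The Fourier transform `f̂(n,m) = (1/N)·Σ_{(a,b)} f(a,b)·exp(2πi(am-bn)/N)` of a
function on `(ℤ/Nℤ)²`. -/
def fhat2 (N : ℕ) [NeZero N] (f : ZMod N × ZMod N → ℂ) : ZMod N × ZMod N → ℂ :=
  fun q => (1 / (N : ℂ)) * ∑ p : ZMod N × ZMod N, f p * eChar N (p.1 * q.2 - p.2 * q.1)

/-- The indicator function of a point of `(ℤ/Nℤ)²`. -/
def indPt (N : ℕ) (b : ZMod N × ZMod N) : ZMod N × ZMod N → ℂ :=
  fun p => if p = b then 1 else 0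

-- helper lemmas
open Complex

lemma echar_eq (N : ℕ) [NeZero N] (m : ℤ) (x : ZMod N) (h : (m : ZMod N) = x) :
    eChar N x = Complex.exp (2 * (Real.pi : ℂ) * Complex.I * (m : ℂ) / (N : ℂ)) := by
  subst h
  have hN0 : (N : ℂ) ≠ 0 := Nat.cast_ne_zero.mpr (NeZero.ne N)
  have hval : (((m : ZMod N).val : ℤ) : ZMod N) = (m : ZMod N) := by
    push_cast
    simp [ZMod.natCast_val, ZMod.cast_id]
  have hdvd : (N : ℤ) ∣ (((m : ZMod N).val : ℤ) - m) := by
    rw [← ZMod.intCast_zmod_eq_zero_iff_dvd]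
    push_cast [ZMod.natCast_val, ZMod.cast_id, ZMod.intCast_cast]
    ring
  obtain ⟨t, ht⟩ := hdvd
  have hv : (((m : ZMod N).val : ℤ) : ℂ) = (m : ℂ) + (N : ℂ) * t := by
    have : ((m : ZMod N).val : ℤ) = m + N * t := by linarith [ht]
    exact_mod_cast congrArg (Int.cast : ℤ → ℂ) this
  rw [eChar]
  push_cast
  rw [show ((m : ZMod N).val : ℂ) = (m : ℂ) + (N : ℂ) * t by exact_mod_cast hv]
  rw [show 2 * (Real.pi : ℂ) * Complex.I * ((m : ℂ) + (N : ℂ) * t) / N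
      = 2 * (Real.pi : ℂ) * Complex.I * m / N + t * (2 * Real.pi * Complex.I) by
    field_simp]
  rw [Complex.exp_add, Complex.exp_int_mul_two_pi_mul_I, mul_one]

lemma echar_norm (N : ℕ) [NeZero N] (x : ZMod N) : ‖eChar N x‖ = 1 := by
  rw [eChar, show 2 * (Real.pi : ℂ) * Complex.I * (x.val : ℂ) / (N : ℂ)
      = ((2 * Real.pi * x.val / N : ℝ) : ℂ) * Complex.I by push_cast; ring]
  rw [Complex.norm_exp_ofReal_mul_I]

lemma echar_sub_split (N : ℕ) [NeZero N] (x y : ZMod N) (c d : ℤ) :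
    eChar N (x * (d : ZMod N) - y * (c : ZMod N))
      = eChar N (x * (d : ZMod N)) * eChar N (y * ((-c : ℤ) : ZMod N)) := by
  have hN0 : (N : ℂ) ≠ 0 := Nat.cast_ne_zero.mpr (NeZero.ne N)
  rw [echar_eq N ((x.val : ℤ) * d - (y.val : ℤ) * c) _ (by
      push_cast; simp [ZMod.natCast_val, ZMod.cast_id]),
    echar_eq N ((x.val : ℤ) * d) _ (by
      push_cast; simp [ZMod.natCast_val, ZMod.cast_id]),
    echar_eq N ((y.val : ℤ) * (-c)) _ (by
      push_cast; simp [ZMod.natCast_val, ZMod.cast_id]),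
    ← Complex.exp_add]
  congr 1
  push_cast
  field_simp
  ring

lemma sum_exp_zmod (M : ℕ) [NeZero M] (c : ℤ) :
    ∑ s : ZMod M, Complex.exp (2 * (Real.pi : ℂ) * Complex.I * ((s.val : ℂ) * c) / M)
      = if (M : ℤ) ∣ c then (M : ℂ) else 0 := by
  have hMpos : 0 < M := Nat.pos_of_ne_zero (NeZero.ne M)
  have hM0 : (M : ℂ) ≠ 0 := Nat.cast_ne_zero.mpr (NeZero.ne M)
  set ζ : ℂ := Complex.exp (2 * (Real.pi : ℂ) * Complex.I * c / M) with hζ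
  have hterm : ∀ s : ZMod M,
      Complex.exp (2 * (Real.pi : ℂ) * Complex.I * ((s.val : ℂ) * c) / M) = ζ ^ s.val := by
    intro s
    rw [hζ, ← Complex.exp_nat_mul]
    congr 1
    field_simp
  have hrange : ∑ s : ZMod M, ζ ^ s.val = ∑ j ∈ Finset.range M, ζ ^ j := by
    apply Finset.sum_nbij' (fun s : ZMod M => s.val) (fun j : ℕ => (j : ZMod M))
    · intro s _; exact Finset.mem_range.mpr (ZMod.val_lt s)
    · intro j _; exact Finset.mem_univ _
    · intro s _; simp [ZMod.natCast_val, ZMod.cast_id]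
    · intro j hj; exact ZMod.val_natCast_of_lt (Finset.mem_range.mp hj)
    · intro s _; rfl
  have hζM : ζ ^ M = 1 := by
    rw [hζ, ← Complex.exp_nat_mul,
      show (M : ℂ) * (2 * (Real.pi : ℂ) * Complex.I * c / M) = (c : ℤ) * (2 * Real.pi * Complex.I)
        by field_simp,
      Complex.exp_int_mul_two_pi_mul_I]
  simp_rw [hterm]
  rw [hrange]
  by_cases hdvd : (M : ℤ) ∣ c
  · obtain ⟨t, ht⟩ := hdvd
    have hζ1 : ζ = 1 := by
      rw [hζ, ht, show 2 * (Real.pi : ℂ) * Complex.I * ((M : ℤ) * t : ℤ) / M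
          = (t : ℤ) * (2 * Real.pi * Complex.I) by push_cast; field_simp,
        Complex.exp_int_mul_two_pi_mul_I]
    simp [hζ1, if_pos, ht]
  · have hζ1 : ζ ≠ 1 := by
      intro h
      rw [hζ, Complex.exp_eq_one_iff] at h
      obtain ⟨n, hn⟩ := h
      apply hdvd
      refine ⟨n, ?_⟩
      rw [mul_comm]
      have hπ : (2 * (Real.pi : ℂ) * Complex.I) ≠ 0 := by
        simp [Real.pi_ne_zero, Complex.I_ne_zero]
      have : (c : ℂ) = n * M := by
        field_simp at hn
        have := hn
        -- hn : 2 * π * I * c = n * (2 * π * I) * M  (roughly)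
        apply mul_left_cancel₀ hπ
        ring_nf
        ring_nf at this
        linear_combination (2 * (Real.pi : ℂ) * Complex.I) * this
      exact_mod_cast this
    rw [geom_sum_eq hζ1, hζM, if_neg hdvd]
    simp

lemma fiber_sum (N : ℕ) [NeZero N] (M : ℕ) (hM : 0 < M) (hMN : M ∣ N) (x0 : ZMod N) (c : ℤ) :
    ∑ x ∈ Finset.univ.filter (fun x : ZMod N => (M : ZMod N) * x = (M : ZMod N) * x0),
      eChar N (x * (c : ZMod N))
    = if (M : ℤ) ∣ c then (M : ℂ) * eChar N (x0 * (c : ZMod N)) else 0 := by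
  haveI : NeZero M := ⟨hM.ne'⟩
  obtain ⟨K, hK⟩ := hMN
  have hNpos : 0 < N := Nat.pos_of_ne_zero (NeZero.ne N)
  have hKpos : 0 < K := by
    rcases Nat.eq_zero_or_pos K with h | h
    · subst h; simp at hK; omega
    · exact h
  have hM0 : (M : ℂ) ≠ 0 := Nat.cast_ne_zero.mpr hM.ne'
  have hK0 : (K : ℂ) ≠ 0 := Nat.cast_ne_zero.mpr hKpos.ne'
  have hNC : (N : ℂ) = (M : ℂ) * (K : ℂ) := by exact_mod_cast congrArg (Nat.cast : ℕ → ℂ) hK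
  have key : ∑ s : ZMod M,
        eChar N (x0 * (c : ZMod N)) *
          Complex.exp (2 * (Real.pi : ℂ) * Complex.I * ((s.val : ℂ) * c) / M)
      = ∑ x ∈ Finset.univ.filter (fun x : ZMod N => (M : ZMod N) * x = (M : ZMod N) * x0),
          eChar N (x * (c : ZMod N)) := by
    apply Finset.sum_nbij' (fun s : ZMod M => x0 + ((K * s.val : ℕ) : ZMod N))
      (fun x : ZMod N => (((x - x0).val / K : ℕ) : ZMod M))
    · intro s _
      simp only [Finset.mem_filter, Finset.mem_univ, true_and]
      have h0 : ((M * (K * s.val) : ℕ) : ZMod N) = 0 := by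
        rw [show M * (K * s.val) = N * s.val by rw [hK]; ring]
        push_cast
        simp
      calc (M : ZMod N) * (x0 + ((K * s.val : ℕ) : ZMod N))
          = (M : ZMod N) * x0 + ((M * (K * s.val) : ℕ) : ZMod N) := by push_cast; ring
        _ = (M : ZMod N) * x0 := by rw [h0, add_zero]
    · intro x _; exact Finset.mem_univ _
    · -- left inverse
      intro s _
      have hlt : K * s.val < N := by
        rw [hK]
        calc K * s.val < K * M := by
              exact mul_lt_mul_of_pos_left (ZMod.val_lt s) hKpos
          _ = M * K := Nat.mul_comm K M
      have h1 : (x0 + ((K * s.val : ℕ) : ZMod N) - x0) = ((K * s.val : ℕ) : ZMod N) := by ring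
      rw [h1, ZMod.val_natCast_of_lt hlt, Nat.mul_div_cancel_left _ hKpos]
      simp [ZMod.natCast_val, ZMod.cast_id]
    · -- right inverse
      intro x hx
      simp only [Finset.mem_filter, Finset.mem_univ, true_and] at hx
      set d : ZMod N := x - x0 with hd
      have hd0 : (M : ZMod N) * d = 0 := by rw [hd]; rw [mul_sub, hx]; ring
      have hdvdN : N ∣ M * d.val := by
        have : ((M * d.val : ℕ) : ZMod N) = 0 := by
          push_cast
          simp only [ZMod.natCast_val, ZMod.cast_id]
          exact hd0
        exact (ZMod.natCast_eq_zero_iff _ _).mp this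
      have hKdvd : K ∣ d.val := by
        have h2 : M * K ∣ M * d.val := by rw [← hK]; exact hdvdN
        exact (mul_dvd_mul_iff_left (a := M) (by exact_mod_cast hM.ne')).mp h2
      have hdivlt : d.val / K < M := by
        rw [Nat.div_lt_iff_lt_mul hKpos]
        calc d.val < N := ZMod.val_lt d
          _ = M * K := hK
      rw [ZMod.val_natCast_of_lt hdivlt, Nat.mul_div_cancel' hKdvd]
      simp only [ZMod.natCast_val, ZMod.cast_id]
      rw [hd]; ring
    · -- summand equality
      intro s _
      rw [echar_eq N ((x0.val : ℤ) * c) (x0 * (c : ZMod N)) (by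
          push_cast [ZMod.natCast_val, ZMod.cast_id, ZMod.intCast_cast]; ring),
        echar_eq N ((x0.val : ℤ) * c + (K * s.val : ℤ) * c)
          ((x0 + ((K * s.val : ℕ) : ZMod N)) * (c : ZMod N)) (by
          push_cast [ZMod.natCast_val, ZMod.cast_id, ZMod.intCast_cast]; ring),
        ← Complex.exp_add]
      congr 1
      rw [hNC]
      push_cast [-ZMod.natCast_val]
      field_simp
  rw [← key, ← Finset.mul_sum, sum_exp_zmod M c]
  split_ifs <;> ring

lemma fhat2_ind (N : ℕ) [NeZero N] (b q : ZMod N × ZMod N) :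
    fhat2 N (indPt N b) q = (1 / (N : ℂ)) * eChar N (b.1 * q.2 - b.2 * q.1) := by
  unfold fhat2 indPt
  congr 1
  rw [Finset.sum_eq_single b]
  · simp
  · intro p _ hp; simp [hp]
  · intro h; exact absurd (Finset.mem_univ b) h


/-- (Distribution relation.)  Let `k ≥ 3`, let `M` be a positive
divisor of `N` and `a ∈ M·(ℤ/Nℤ)²`.  Then for every `z ∈ ℍ`,
`M^{k-2}·Σ_{M·b = a} E_{k, \widehat{𝟙_b}}(z) = E_{k, \widehat{𝟙_a}}(z)`. -/
theorem statement11 (N : ℕ) [NeZero N] (k : ℕ) (hk : 3 ≤ k)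
    (M : ℕ) (hM : 0 < M) (hMN : M ∣ N)
    (a : ZMod N × ZMod N)
    (ha : ∃ b : ZMod N × ZMod N, a = ((M : ZMod N) * b.1, (M : ZMod N) * b.2))
    (z : ℍ) :
    (M : ℂ) ^ (k - 2) *
        ∑ b ∈ Finset.univ.filter
            (fun b : ZMod N × ZMod N => ((M : ZMod N) * b.1, (M : ZMod N) * b.2) = a),
          Ek N k (fhat2 N (indPt N b)) (z : ℂ)
      = Ek N k (fhat2 N (indPt N a)) (z : ℂ) := by
  classical
  obtain ⟨b0, hab⟩ := ha
  haveI : NeZero M := ⟨hM.ne'⟩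
  have hM0 : (M : ℂ) ≠ 0 := Nat.cast_ne_zero.mpr hM.ne'
  have hMZ : (M : ℤ) ≠ 0 := Int.natCast_ne_zero.mpr hM.ne'
  have hN0 : (N : ℂ) ≠ 0 := Nat.cast_ne_zero.mpr (NeZero.ne N)
  have ha1 : a.1 = (M : ZMod N) * b0.1 := by rw [hab]
  have ha2 : a.2 = (M : ZMod N) * b0.2 := by rw [hab]
  set S := Finset.univ.filter
    (fun b : ZMod N × ZMod N => ((M : ZMod N) * b.1, (M : ZMod N) * b.2) = a) with hS
  -- summability of the basic Eisenstein summand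
  have hSum : Summable fun p : ℤ × ℤ => ‖((p.1 : ℂ) * (z : ℂ) + (p.2 : ℂ)) ^ (-(k : ℤ))‖ := by
    have h1 := EisensteinSeries.summable_norm_eisSummand (k := (k : ℤ)) (by exact_mod_cast hk) z
    have h2 := h1.comp_injective (finTwoArrowEquiv ℤ).symm.injective
    apply h2.congr
    intro p
    simp [Function.comp, EisensteinSeries.eisSummand, finTwoArrowEquiv, UpperHalfPlane.coe]
  set F : (ZMod N × ZMod N) → ℤ × ℤ → ℂ := fun b p =>
    if p = (0, 0) then 0
    else fhat2 N (indPt N b) ((p.1 : ZMod N), (p.2 : ZMod N)) *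
      ((p.1 : ℂ) * (z : ℂ) + (p.2 : ℂ)) ^ (-(k : ℤ)) with hF
  have hEkF : ∀ b : ZMod N × ZMod N, Ek N k (fhat2 N (indPt N b)) (z : ℂ) = ∑' p, F b p :=
    fun b => rfl
  have hFsumm : ∀ b : ZMod N × ZMod N, Summable (F b) := by
    intro b
    apply Summable.of_norm
    refine (hSum.mul_left (1 / (N : ℝ))).of_nonneg_of_le (fun _ => norm_nonneg _) ?_
    intro p
    by_cases hp : p = (0, 0)
    · simp only [hF, hp, if_pos, norm_zero]
      positivity
    · simp only [hF, if_neg hp]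
      rw [norm_mul, fhat2_ind, norm_mul, echar_norm, mul_one]
      have : ‖(1 / (N : ℂ))‖ = 1 / (N : ℝ) := by simp
      rw [this]
  -- the summed coefficient function
  set G : ℤ × ℤ → ℂ := fun p =>
    if p = (0, 0) then 0
    else (1 / (N : ℂ)) *
      ((if (M : ℤ) ∣ p.2 then (M : ℂ) * eChar N (b0.1 * ((p.2 : ℤ) : ZMod N)) else 0) *
       (if (M : ℤ) ∣ -p.1 then (M : ℂ) * eChar N (b0.2 * ((-p.1 : ℤ) : ZMod N)) else 0)) *
      ((p.1 : ℂ) * (z : ℂ) + (p.2 : ℂ)) ^ (-(k : ℤ)) with hG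
  have hpt : ∀ p : ℤ × ℤ, ∑ b ∈ S, F b p = G p := by
    intro p
    by_cases hp : p = (0, 0)
    · simp [hF, hG, hp]
    · simp only [hF, hG, if_neg hp]
      rw [← Finset.sum_mul]
      congr 1
      have h1 : ∀ b ∈ S, fhat2 N (indPt N b) ((p.1 : ZMod N), (p.2 : ZMod N))
          = (1 / (N : ℂ)) * (eChar N (b.1 * ((p.2 : ℤ) : ZMod N)) *
              eChar N (b.2 * ((-p.1 : ℤ) : ZMod N))) := by
        intro b _
        rw [fhat2_ind]
        congr 1
        exact echar_sub_split N b.1 b.2 p.1 p.2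
      rw [Finset.sum_congr rfl h1, ← Finset.mul_sum]
      congr 1
      have hSprod : S =
          (Finset.univ.filter fun x : ZMod N => (M : ZMod N) * x = (M : ZMod N) * b0.1) ×ˢ
          (Finset.univ.filter fun y : ZMod N => (M : ZMod N) * y = (M : ZMod N) * b0.2) := by
        rw [hS, hab]
        ext b
        simp only [Finset.mem_filter, Finset.mem_univ, true_and, Finset.mem_product,
          Prod.ext_iff]
      rw [hSprod, Finset.sum_product]
      dsimp only
      rw [← Finset.sum_mul_sum,
        fiber_sum N M hM hMN b0.1 p.2, fiber_sum N M hM hMN b0.2 (-p.1)]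
  set g : ℤ × ℤ → ℤ × ℤ := fun q => ((M : ℤ) * q.1, (M : ℤ) * q.2) with hg
  have hginj : Function.Injective g := by
    intro q1 q2 h
    rw [hg, Prod.ext_iff] at h
    exact Prod.ext (mul_left_cancel₀ hMZ h.1) (mul_left_cancel₀ hMZ h.2)
  have hsupp : Function.support G ⊆ Set.range g := by
    intro p hp
    by_cases h1 : (M : ℤ) ∣ p.2
    · by_cases h2 : (M : ℤ) ∣ -p.1
      · obtain ⟨c', hc⟩ := dvd_neg.mp h2
        obtain ⟨d', hd⟩ := h1
        exact ⟨(c', d'), by rw [hg]; exact Prod.ext hc.symm hd.symm⟩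
      · refine absurd ?_ hp
        simp only [hG]
        split_ifs <;> first
          | rfl
          | ring
          | exact absurd ‹(M : ℤ) ∣ -p.1› h2
    · refine absurd ?_ hp
      simp only [hG]
      split_ifs <;> first
        | rfl
        | ring
        | exact absurd ‹(M : ℤ) ∣ p.2› h1
  calc (M : ℂ) ^ (k - 2) * ∑ b ∈ S, Ek N k (fhat2 N (indPt N b)) (z : ℂ)
      = (M : ℂ) ^ (k - 2) * ∑' p, G p := by
        rw [Finset.sum_congr rfl (fun b _ => hEkF b), ← Summable.tsum_finsetSum (fun b _ => hFsumm b)]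
        congr 1
        exact tsum_congr hpt
    _ = (M : ℂ) ^ (k - 2) * ∑' q, G (g q) := by rw [hginj.tsum_eq hsupp]
    _ = ∑' q, (M : ℂ) ^ (k - 2) * G (g q) := tsum_mul_left.symm
    _ = Ek N k (fhat2 N (indPt N a)) (z : ℂ) := by
        rw [Ek]
        apply tsum_congr
        intro q
        by_cases hq : q = (0, 0)
        · simp [hG, hg, hq]
        · have hg0 : g (0, 0) = (0, 0) := by rw [hg]; simp
          have hgq : g q ≠ (0, 0) := fun hcon => hq (hginj (hcon.trans hg0.symm))
          rw [if_neg hq, fhat2_ind]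
          simp only [hG, hg, if_neg hgq]
          rw [if_pos (Dvd.intro _ rfl), if_pos (dvd_neg.mpr (Dvd.intro _ rfl))]
          have e1 : b0.1 * ((((M : ℤ) * q.2) : ℤ) : ZMod N) = a.1 * ((q.2 : ℤ) : ZMod N) := by
            rw [ha1]; push_cast; ring
          have e2 : b0.2 * (((-((M : ℤ) * q.1)) : ℤ) : ZMod N)
              = a.2 * ((-q.1 : ℤ) : ZMod N) := by
            rw [ha2]; push_cast; ring
          rw [e1, e2]
          have esplit : eChar N (a.1 * ((q.2 : ℤ) : ZMod N) - a.2 * ((q.1 : ℤ) : ZMod N))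
              = eChar N (a.1 * ((q.2 : ℤ) : ZMod N)) * eChar N (a.2 * ((-q.1 : ℤ) : ZMod N)) :=
            echar_sub_split N a.1 a.2 q.1 q.2
          rw [esplit]
          have hw : ((((M : ℤ) * q.1 : ℤ) : ℂ)) * (z : ℂ) + (((M : ℤ) * q.2 : ℤ) : ℂ)
              = (M : ℂ) * ((q.1 : ℂ) * (z : ℂ) + (q.2 : ℂ)) := by push_cast; ring
          rw [hw, mul_zpow]
          have hM1 : (M : ℂ) ^ (k - 2) * (M : ℂ) * (M : ℂ) * (M : ℂ) ^ (-(k : ℤ)) = 1 := by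
            have h2 : (M : ℂ) ^ (k - 2) * (M : ℂ) * (M : ℂ) = (M : ℂ) ^ k := by
              rw [← pow_succ, ← pow_succ]
              congr 1
              omega
            rw [h2, ← zpow_natCast (M : ℂ) k, ← zpow_add₀ hM0]
            simp
          set E1 := eChar N (a.1 * ((q.2 : ℤ) : ZMod N)) with hE1
          set E2 := eChar N (a.2 * ((-q.1 : ℤ) : ZMod N)) with hE2
          set W := ((q.1 : ℂ) * (z : ℂ) + (q.2 : ℂ)) ^ (-(k : ℤ)) with hW
          rw [if_neg (show ¬ (((M : ℤ) * q.1, (M : ℤ) * q.2) = (0, 0)) from hgq)]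
          linear_combination (E1 * E2 * W / (N : ℂ)) * hM1
end
end

section
/- Let N ≥ 1 and let q₁, q₂ be positive integers with q₂ ∣ q₁ and q₁ ∣ N. Then there exists a divisor d of N such that q₁ = N/gcd(d, N/d) and q₂ = (N/d)/gcd(d, N/d) if and only if for every prime p dividing N, either v_p(N/q₁) = v_p(q₁/q₂), or both v_p(N/q₁) ≤ v_p(q₁/q₂) and v_p(q₂) = 0, where v_p denotes the p-adic valuation. -/
/-!
Write `g = gcd(d, N/d)`. Since `N / g = d · ((N/d) / g)`, the only possible `d` is `q₁ / q₂`,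
so the existence question becomes whether this particular `d` works, which can be tested one
prime at a time. With `n, a` the exponents of `p` in `N, d`, the exponent of `p` in `g` is
`min(a, n - a)`, and the two required equalities reduce to the stated dichotomy by linear
arithmetic on exponents.
-/

section
variable {N d : ℕ}

theorem factorization_gcd_div_self_apply (hN : N ≠ 0) (hd : d ∣ N) (p : ℕ) :
    (d.gcd (N / d)).factorization p =
      min (d.factorization p) (N.factorization p - d.factorization p) := by
  have hd₀ : d ≠ 0 := ne_zero_of_dvd_ne_zero hN hd
  have hNd : N / d ≠ 0 := (Nat.div_ne_zero_iff_of_dvd hd).2 ⟨hN, hd₀⟩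
  rw [Nat.factorization_gcd hd₀ hNd, Finsupp.inf_apply, Nat.factorization_div hd,
    Finsupp.tsub_apply]

theorem factorization_div_gcd_div_self_apply (hN : N ≠ 0) (hd : d ∣ N) (p : ℕ) :
    (N / d.gcd (N / d)).factorization p = N.factorization p -
      min (d.factorization p) (N.factorization p - d.factorization p) := by
  rw [Nat.factorization_div ((Nat.gcd_dvd_left _ _).trans hd), Finsupp.tsub_apply,
    factorization_gcd_div_self_apply hN hd]

theorem factorization_div_div_gcd_div_self_apply (hN : N ≠ 0) (hd : d ∣ N) (p : ℕ) :
    (N / d / d.gcd (N / d)).factorization p = N.factorization p - d.factorization p -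
      min (d.factorization p) (N.factorization p - d.factorization p) := by
  rw [Nat.factorization_div (Nat.gcd_dvd_right _ _), Finsupp.tsub_apply,
    Nat.factorization_div hd, Finsupp.tsub_apply, factorization_gcd_div_self_apply hN hd]

theorem div_gcd_div_div_div_gcd_div (hN : N ≠ 0) (hd : d ∣ N) :
    N / d.gcd (N / d) / (N / d / d.gcd (N / d)) = d := by
  have hd₀ : d ≠ 0 := ne_zero_of_dvd_ne_zero hN hd
  have hNd : N / d ≠ 0 := (Nat.div_ne_zero_iff_of_dvd hd).2 ⟨hN, hd₀⟩
  have hg := Nat.gcd_dvd_right d (N / d)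
  have hq₂ : N / d / d.gcd (N / d) ≠ 0 :=
    (Nat.div_ne_zero_iff_of_dvd hg).2 ⟨hNd, Nat.gcd_ne_zero_left hd₀⟩
  have hsplit : N / d.gcd (N / d) = d * (N / d / d.gcd (N / d)) := by
    rw [← Nat.mul_div_assoc d hg, Nat.mul_div_cancel' hd]
  rw [hsplit]
  exact Nat.mul_div_cancel d (Nat.pos_of_ne_zero hq₂)

end

theorem eq_iff_factorization_eq_of_dvd {N a b : ℕ} (hN : N ≠ 0) (ha : a ∣ N) (hb : b ∣ N) :
    a = b ↔ ∀ p : ℕ, p.Prime → p ∣ N → a.factorization p = b.factorization p := by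
  refine ⟨fun h _ _ _ => h ▸ rfl, fun h => ?_⟩
  refine Nat.eq_of_factorization_eq (ne_zero_of_dvd_ne_zero hN ha)
    (ne_zero_of_dvd_ne_zero hN hb) fun p => ?_
  by_cases hp : p.Prime
  · by_cases hpN : p ∣ N
    · exact h p hp hpN
    · rw [Nat.factorization_eq_zero_of_not_dvd (mt (·.trans ha) hpN),
        Nat.factorization_eq_zero_of_not_dvd (mt (·.trans hb) hpN)]
  · rw [Nat.factorization_eq_zero_of_not_prime _ hp, Nat.factorization_eq_zero_of_not_prime _ hp]

/-- The theorem at one prime: `n, e₁, e₂` are the exponents of `N, q₁, q₂`, and `e₁ - e₂`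
is that of `d = q₁ / q₂`. -/
theorem exponents_eq_iff {n e₁ e₂ : ℕ} (h₂₁ : e₂ ≤ e₁) (h₁ : e₁ ≤ n) :
    (e₁ = n - min (e₁ - e₂) (n - (e₁ - e₂)) ∧
        e₂ = n - (e₁ - e₂) - min (e₁ - e₂) (n - (e₁ - e₂))) ↔
      (n - e₁ = e₁ - e₂ ∨ (n - e₁ ≤ e₁ - e₂ ∧ e₂ = 0)) := by
  omega

theorem statement13_general (N q₁ q₂ : ℕ) (hN : 0 < N)
    (h21 : q₂ ∣ q₁) (h1N : q₁ ∣ N) :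
    (∃ d : ℕ, d ∣ N ∧ q₁ = N / Nat.gcd d (N / d) ∧ q₂ = (N / d) / Nat.gcd d (N / d)) ↔
      ∀ p : ℕ, p.Prime → p ∣ N →
        ((N / q₁).factorization p = (q₁ / q₂).factorization p ∨
          ((N / q₁).factorization p ≤ (q₁ / q₂).factorization p ∧
            q₂.factorization p = 0)) := by
  have hN₀ : N ≠ 0 := hN.ne'
  have hq₁ : q₁ ≠ 0 := ne_zero_of_dvd_ne_zero hN₀ h1N
  have hq₂ : q₂ ≠ 0 := ne_zero_of_dvd_ne_zero hq₁ h21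
  set d := q₁ / q₂ with hd
  have hdN : d ∣ N := (Nat.div_dvd_of_dvd h21).trans h1N
  have hd_unique : (∃ d : ℕ, d ∣ N ∧ q₁ = N / Nat.gcd d (N / d) ∧
      q₂ = (N / d) / Nat.gcd d (N / d)) ↔
      q₁ = N / Nat.gcd d (N / d) ∧ q₂ = (N / d) / Nat.gcd d (N / d) := by
    refine ⟨?_, fun h => ⟨d, hdN, h⟩⟩
    rintro ⟨d', hd', rfl, rfl⟩
    rw [hd, div_gcd_div_div_div_gcd_div hN₀ hd']
    exact ⟨rfl, rfl⟩
  rw [hd_unique,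
    eq_iff_factorization_eq_of_dvd hN₀ h1N
      (Nat.div_dvd_of_dvd ((Nat.gcd_dvd_left _ _).trans hdN)),
    eq_iff_factorization_eq_of_dvd hN₀ (h21.trans h1N)
      ((Nat.div_dvd_of_dvd (Nat.gcd_dvd_right _ _)).trans (Nat.div_dvd_of_dvd hdN))]
  simp only [← forall_and]
  refine forall₃_congr fun p _ _ => ?_
  rw [factorization_div_gcd_div_self_apply hN₀ hdN,
    factorization_div_div_gcd_div_self_apply hN₀ hdN, hd,
    Nat.factorization_div h21, Nat.factorization_div h1N, Finsupp.tsub_apply, Finsupp.tsub_apply]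
  exact exponents_eq_iff ((Nat.factorization_le_iff_dvd hq₂ hq₁).2 h21 p)
    ((Nat.factorization_le_iff_dvd hq₁ hN₀).2 h1N p)

/-- Let `N ≥ 1` and let `q₁, q₂` be positive integers with `q₂ ∣ q₁`
and `q₁ ∣ N`.  Then there exists a divisor `d` of `N` with `q₁ = N/gcd(d, N/d)` and
`q₂ = (N/d)/gcd(d, N/d)` if and only if for every prime `p` dividing `N`, either
`v_p(N/q₁) = v_p(q₁/q₂)`, or both `v_p(N/q₁) ≤ v_p(q₁/q₂)` and `v_p(q₂) = 0`. -/
theorem statement13 (N q₁ q₂ : ℕ) (hN : 0 < N) (hq₁ : 0 < q₁) (hq₂ : 0 < q₂)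
    (h21 : q₂ ∣ q₁) (h1N : q₁ ∣ N) :
    (∃ d : ℕ, d ∣ N ∧ q₁ = N / Nat.gcd d (N / d) ∧ q₂ = (N / d) / Nat.gcd d (N / d)) ↔
      ∀ p : ℕ, p.Prime → p ∣ N →
        ((N / q₁).factorization p = (q₁ / q₂).factorization p ∨
          ((N / q₁).factorization p ≤ (q₁ / q₂).factorization p ∧
            q₂.factorization p = 0)) :=
  statement13_general N q₁ q₂ hN h21 h1N
end
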